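/- arXiv:0708.2663 — 4 statements merged into one kernel-verified Lean document; each statement's English description precedes it below -/
import Mathlib

section
/- Let a tile have boundary edges carrying instances of a marking symbol x, where an edge shape X fits only against the complementary shape X'. Suppose every 'black' edge pair (B1, B2) of a tile interior to a row satisfies either B1 = B2' (and hence B2 = B1') or rB1 = B1' and rB2 = B2' (where r denotes rotation by 180°). Then the number of instances of x' appearing on the black edges is at most the number of instances of x on the black edges. -/
open Complex Set

noncomputable section

/-- The unit vector at angle 60°. -/
def uvec : ℂ := Complex.exp ((Real.pi / 3 : ℝ) * Complex.I)

/-- A direct (orientation-preserving) isometry of the plane `ℂ`: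
`z ↦ a z + b` with `|a| = 1` (a rotation followed by a translation). -/
structure DirectIsom where
  a : ℂ
  b : ℂ
  ha : ‖a‖ = 1

def DirectIsom.apply (g : DirectIsom) (z : ℂ) : ℂ := g.a * z + g.b

def DirectIsom.image (g : DirectIsom) (S : Set ℂ) : Set ℂ := g.apply '' S

/-- The 1×L parallelogram with angles 60° and 120°: long edges of length `L`
along the real axis, short edges of length 1 in direction `uvec`. -/
def Para (L : ℕ) : Set ℂ :=
  {z | ∃ s t : ℝ, s ∈ Icc (0 : ℝ) (L : ℝ) ∧ t ∈ Icc (0 : ℝ) 1 ∧ z = (s : ℂ) + (t : ℂ) * uvec}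

/-- The two short (red) edges of `Para L`, vertices excluded. -/
def RedEdges (L : ℕ) : Set ℂ :=
  {z | ∃ t : ℝ, t ∈ Ioo (0 : ℝ) 1 ∧ (z = (t : ℂ) * uvec ∨ z = (L : ℂ) + (t : ℂ) * uvec)}

/-- The two long (black) edges of `Para L`, vertices included. -/
def BlackEdges (L : ℕ) : Set ℂ :=
  {z | ∃ s : ℝ, s ∈ Icc (0 : ℝ) (L : ℝ) ∧ (z = (s : ℂ) ∨ z = (s : ℂ) + uvec)}

/-- `T` is a tiling of the plane by congruent copies (rotations and translations only)
of the prototile `P`: every tile is a direct-isometry image of `P`, the tiles cover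
the plane, and distinct tiles overlap only along their boundaries. -/
def IsTiling (T : Set (Set ℂ)) (P : Set ℂ) : Prop :=
  (∀ t ∈ T, ∃ g : DirectIsom, t = g.image P) ∧
  (⋃ t ∈ T, t) = univ ∧
  T.Pairwise fun t t' => Disjoint (interior t) (interior t')

/-- The marked (e.g. red) part of a tile `t`, a congruent copy of prototile `P`
with marking `M ⊆ P`: the union of the images of `M` under all placements of `P`
giving the tile `t`. -/
def MarkOf (P M : Set ℂ) (t : Set ℂ) : Set ℂ :=
  ⋃ g ∈ {g : DirectIsom | g.image P = t}, g.image M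

/-- The matching rule: no point is covered by the markings of two distinct tiles. -/
def MarkRule (P M : Set ℂ) (T : Set (Set ℂ)) : Prop :=
  T.Pairwise fun t t' => Disjoint (MarkOf P M t) (MarkOf P M t')

/-- A tiling of the plane by the 1×L parallelogram in which no two red (short)
edges touch. -/
def IsRedTiling (L : ℕ) (T : Set (Set ℂ)) : Prop :=
  IsTiling T (Para L) ∧ MarkRule (Para L) (RedEdges L) T

/-- `g` is a symmetry of the tiling `T`: it permutes the tiles. -/
def IsSymmetry (T : Set (Set ℂ)) (g : DirectIsom) : Prop :=
  (fun t => g.image t) '' T = T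

/-- Two tiles are equivalent iff some symmetry of the whole tiling maps one to the other. -/
def TileEquiv (T : Set (Set ℂ)) (t t' : Set ℂ) : Prop :=
  ∃ g : DirectIsom, IsSymmetry T g ∧ g.image t = t'

/-- The isohedral number of `T` equals `k`: the tiles fall into exactly `k`
equivalence classes under the symmetry group of the tiling. -/
def IsohedralNumberIs (T : Set (Set ℂ)) (k : ℕ) : Prop :=
  ∃ f : {t // t ∈ T} → Fin k, Function.Surjective f ∧
    ∀ t t' : {t // t ∈ T}, f t = f t' ↔ TileEquiv T t.1 t'.1

/-- The isohedral number of `T` is at least `k`: there are `k` pairwise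
inequivalent tiles. -/
def IsohedralAtLeast (T : Set (Set ℂ)) (k : ℕ) : Prop :=
  ∃ c : Fin k → Set ℂ, (∀ i, c i ∈ T) ∧
    ∀ i j, i ≠ j → ¬ TileEquiv T (c i) (c j)

/-- Honeycomb translation vectors for hexagons of side `L`. -/
def hexT1 (L : ℕ) : ℂ := (L : ℂ) * (1 + uvec)

def hexT2 (L : ℕ) : ℂ := (L : ℂ) * (uvec + uvec ^ 2)

/-- A tile of the hexagonal parquet: board `j` of rhombus `m` (the three rhombi,
with board directions mutually rotated by 120°, make up the hexagon with vertices
`L * uvec ^ k`), translated by the honeycomb lattice vector `p • hexT1 + q • hexT2`. -/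
def hexTile (L : ℕ) (m : Fin 3) (j : Fin L) (p q : ℤ) : Set ℂ :=
  (fun z => uvec ^ (2 * (m : ℕ) + 2) * z + uvec ^ (2 * (m : ℕ)) * (((j : ℕ) : ℂ) + 1)
      + (p : ℂ) * hexT1 L + (q : ℂ) * hexT2 L) '' Para L

/-- The hexagonal parquet tiling of the plane with parameter `L`. -/
def HexParquet (L : ℕ) : Set (Set ℂ) :=
  {t | ∃ (m : Fin 3) (j : Fin L) (p q : ℤ), t = hexTile L m j p q}

/-- the counting lemma.  Edge shapes form an abstract type with a
complement operation `compl` (shape `X` fits only against `compl X`) and a 180°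
rotation `rot`; `nx X` and `nx' X` count the instances of the marking symbol
`x` and of its complement `x'` on the shape `X`.  Complementation exchanges the
two counts and rotation preserves them.  If a black edge pair `(B1, B2)`
satisfies `B1 = compl B2` (hence `B2 = compl B1`) or `rot B1 = compl B1` and
`rot B2 = compl B2`, then the number of instances of `x'` on the black edges is
at most the number of instances of `x` on them. -/
theorem black_edge_counting_lemma {Shape : Type*} (compl rot : Shape → Shape)
    (nx nx' : Shape → ℕ)
    (hcompl : ∀ X, nx (compl X) = nx' X) (hcompl' : ∀ X, nx' (compl X) = nx X)
    (hrot : ∀ X, nx (rot X) = nx X) (hrot' : ∀ X, nx' (rot X) = nx' X)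
    (B1 B2 : Shape)
    (h : B1 = compl B2 ∨ (rot B1 = compl B1 ∧ rot B2 = compl B2)) :
    nx' B1 + nx' B2 ≤ nx B1 + nx B2 := by
  rcases h with h | ⟨h1, h2⟩
  · have e1 : nx' B1 = nx B2 := by rw [h, hcompl']
    have e2 : nx B1 = nx' B2 := by rw [h, hcompl]
    omega
  · have e1 : nx B1 = nx' B1 := by rw [← hrot B1, h1, hcompl]
    have e2 : nx B2 = nx' B2 := by rw [← hrot B2, h2, hcompl]
    omega
end
end

section
/- If a closed topological disk tile T in the plane has boundary features such that the total count over its boundary of a marked sub-shape x strictly exceeds the count of the complementary sub-shape x', and in any tiling every instance of x on a tile's boundary must coincide with an instance of x' on a neighboring tile's boundary, then no tiling of the plane by congruent copies of T (rotations and translations) exists. -/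
open Complex Set

noncomputable section

section NoTilingAuxSection
open Metric MeasureTheory Filter
open scoped ENNReal
set_option maxHeartbeats 1000000

namespace NoTilingAux

lemma telescope (f : ℕ → ℂ) (hf : ∀ i, f i ≠ 0) (n : ℕ) :
    f 0 * ∏ j ∈ Finset.range n, (f (j+1) / f j) = f n := by
  induction n with
  | zero => simp
  | succ n ih =>
      rw [Finset.prod_range_succ, ← mul_assoc, ih, mul_comm, div_mul_cancel₀ _ (hf n)]

lemma exists_lift (γ : ℝ → ℂ) (hc : Continuous γ) (h0 : ∀ t, γ t ≠ 0) :
    ∃ Λ : ℝ → ℂ, Continuous Λ ∧ ∀ t ∈ Icc (0:ℝ) 1, Complex.exp (Λ t) = γ t := by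
  obtain ⟨t₀, ht₀, hmin⟩ := (isCompact_Icc (a := (0:ℝ)) (b := 1)).exists_isMinOn
    (nonempty_Icc.mpr zero_le_one) (continuous_norm.comp hc).continuousOn
  set m := ‖γ t₀‖ with hm
  have hm0 : 0 < m := norm_pos_iff.mpr (h0 t₀)
  obtain ⟨δ, hδ0, hδ⟩ := Metric.uniformContinuousOn_iff.mp
    ((isCompact_Icc (a := (0:ℝ)) (b := 1)).uniformContinuousOn_of_continuous hc.continuousOn) m hm0
  obtain ⟨n, hn⟩ := exists_nat_gt (1/δ)
  have hn0 : (0:ℝ) < n := lt_trans (one_div_pos.mpr hδ0) hn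
  have hinv : (1:ℝ)/n < δ := by
    rw [div_lt_iff₀ hn0]
    have h1 : δ * (1/δ) < δ * n := mul_lt_mul_of_pos_left hn hδ0
    rw [mul_one_div, div_self (ne_of_gt hδ0)] at h1
    linarith
  set τ : ℝ → ℝ := fun t => max 0 (min t 1) with hτ
  have hτc : Continuous τ := continuous_const.max (continuous_id.min continuous_const)
  have hτmem : ∀ t, τ t ∈ Icc (0:ℝ) 1 := fun t =>
    ⟨le_max_left _ _, max_le (zero_le_one) (min_le_right _ _)⟩
  -- the sample points
  set p : ℕ → ℝ → ℝ := fun j t => min (τ t) (j / n) with hp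
  have hpmem : ∀ j t, p j t ∈ Icc (0:ℝ) 1 := by
    intro j t
    refine ⟨le_min (hτmem t).1 (by positivity), min_le_of_left_le (hτmem t).2⟩
  have hpc : ∀ j, Continuous fun t => p j t := fun j => hτc.min continuous_const
  have hpdist : ∀ j t, dist (p (j+1) t) (p j t) < δ := by
    intro j t
    have h1 : p j t ≤ p (j+1) t := by
      apply min_le_min le_rfl
      gcongr
      exact_mod_cast Nat.le_succ j
    have h2 : p (j+1) t - p j t ≤ 1/n := by
      rcases le_or_gt (τ t) ((j:ℝ)/n) with h | h
      · have : p (j+1) t = p j t := by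
          simp only [hp]
          rw [min_eq_left h, min_eq_left (le_trans h (by
            gcongr
            exact_mod_cast Nat.le_succ j))]
        simp [this]
      · have hpj : p j t = (j:ℝ)/n := min_eq_right h.le
        have : p (j+1) t ≤ ((j:ℝ)+1)/n := by
          simpa [hp] using min_le_right (τ t) _
        calc p (j+1) t - p j t ≤ ((j:ℝ)+1)/n - (j:ℝ)/n := by
              rw [hpj]; exact sub_le_sub_right this _
        _ = 1/n := by ring
    rw [Real.dist_eq, _root_.abs_of_nonneg (by linarith)]
    calc p (j+1) t - p j t ≤ 1/n := h2
    _ < δ := hinv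
  set u : ℕ → ℝ → ℂ := fun j t => γ (p (j+1) t) / γ (p j t) with hu
  have key : ∀ j t, ‖u j t - 1‖ < 1 := by
    intro j t
    have hd : dist (γ (p (j+1) t)) (γ (p j t)) < m :=
      hδ _ (hpmem _ t) _ (hpmem _ t) (hpdist j t)
    have hmle : m ≤ ‖γ (p j t)‖ := hmin (hpmem j t)
    have hne := h0 (p j t)
    have : u j t - 1 = (γ (p (j+1) t) - γ (p j t)) / γ (p j t) := by
      simp only [hu]
      rw [div_sub_one hne]
    rw [this, norm_div]
    rw [div_lt_one (norm_pos_iff.mpr hne)]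
    calc ‖γ (p (j+1) t) - γ (p j t)‖ = dist (γ (p (j+1) t)) (γ (p j t)) :=
          (Complex.dist_eq _ _).symm
    _ < m := hd
    _ ≤ _ := hmle
  have unz : ∀ j t, u j t ≠ 0 := by
    intro j t h
    have := key j t
    rw [h] at this
    simp at this
  have slit : ∀ j t, u j t ∈ Complex.slitPlane := by
    intro j t
    rw [Complex.mem_slitPlane_iff]
    left
    have h1 : (1 - u j t).re ≤ ‖1 - u j t‖ := Complex.re_le_norm _
    have h2 : ‖1 - u j t‖ < 1 := by
      rw [← norm_neg]; simpa using key j t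
    have : (1 - u j t).re = 1 - (u j t).re := by simp
    linarith [this ▸ h1]
  refine ⟨fun t => Complex.log (γ 0) + ∑ j ∈ Finset.range n, Complex.log (u j t), ?_, ?_⟩
  · apply continuous_const.add
    apply continuous_finset_sum
    intro j _
    rw [continuous_iff_continuousAt]
    intro t
    exact ContinuousAt.clog (((hc.comp (hpc (j+1))).continuousAt).div
      ((hc.comp (hpc j)).continuousAt) (h0 _)) (slit j t)
  · intro t ht
    rw [Complex.exp_add, Complex.exp_sum]
    have h1 : ∀ j ∈ Finset.range n, Complex.exp (Complex.log (u j t)) = u j t := by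
      intro j _
      exact Complex.exp_log (unz j t)
    rw [Finset.prod_congr rfl h1, Complex.exp_log (h0 0)]
    have hτt : τ t = t := by
      simp only [hτ]
      rw [min_eq_left ht.2, max_eq_right ht.1]
    have := telescope (fun j => γ (p j t)) (fun i => h0 _) n
    have hp0 : p 0 t = 0 := by
      simp only [hp, hτt]
      simp [min_eq_right ht.1]
    have hpn : p n t = t := by
      simp only [hp, hτt]
      rw [div_self (ne_of_gt hn0), min_eq_left ht.2]
    rw [hp0] at this
    rw [hpn] at this
    exact this

/-- A continuous integer-valued function on `[a,b]` takes the same value at endpoints. -/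
lemma int_valued_const {a b : ℝ} (hab : a ≤ b) (g : ℝ → ℝ)
    (hg : ContinuousOn g (Icc a b)) (hint : ∀ t ∈ Icc a b, ∃ k : ℤ, g t = k) :
    g b = g a := by
  by_contra hne
  obtain ⟨k0, hk0⟩ := hint a (left_mem_Icc.mpr hab)
  obtain ⟨k1, hk1⟩ := hint b (right_mem_Icc.mpr hab)
  rcases lt_or_gt_of_ne hne with h | h
  · -- g b < g a : k1 < k0, value (k1 + 1/2) between
    have hk : k1 < k0 := by exact_mod_cast (hk1 ▸ hk0 ▸ h)
    have hv : ((k1:ℝ) + 1/2) ∈ Icc (g b) (g a) := by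
      rw [hk0, hk1]
      constructor
      · linarith
      · have : (k1:ℝ) + 1 ≤ k0 := by exact_mod_cast hk
        linarith
    obtain ⟨t, ht, hgt⟩ := intermediate_value_Icc' hab hg hv
    obtain ⟨k, hkt⟩ := hint t ht
    rw [hkt] at hgt
    have h2 : ((2*k : ℤ) : ℝ) = ((2*k1+1 : ℤ) : ℝ) := by push_cast; linarith [hgt]
    have h3 : (2*k : ℤ) = 2*k1+1 := by exact_mod_cast h2
    omega
  · have hk : k0 < k1 := by exact_mod_cast (hk1 ▸ hk0 ▸ h)
    have hv : ((k0:ℝ) + 1/2) ∈ Icc (g a) (g b) := by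
      rw [hk0, hk1]
      constructor
      · linarith
      · have : (k0:ℝ) + 1 ≤ k1 := by exact_mod_cast hk
        linarith
    obtain ⟨t, ht, hgt⟩ := intermediate_value_Icc hab hg hv
    obtain ⟨k, hkt⟩ := hint t ht
    rw [hkt] at hgt
    have h2 : ((2*k : ℤ) : ℝ) = ((2*k0+1 : ℤ) : ℝ) := by push_cast; linarith [hgt]
    have h3 : (2*k : ℤ) = 2*k0+1 := by exact_mod_cast h2
    omega

/-- If a continuous function on `[a,b]` takes values in `2πiℤ`, its endpoint values agree. -/
lemma two_pi_int_const {a b : ℝ} (hab : a ≤ b) (d : ℝ → ℂ)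
    (hd : ContinuousOn d (Icc a b))
    (hint : ∀ t ∈ Icc a b, ∃ k : ℤ, d t = k * (2 * Real.pi * Complex.I)) :
    d b = d a := by
  have hre : ∀ t ∈ Icc a b, (d t).re = 0 := by
    intro t ht
    obtain ⟨k, hk⟩ := hint t ht
    rw [hk]
    simp
  have him : (d b).im = (d a).im := by
    have hπ : (2:ℝ) * Real.pi ≠ 0 := by positivity
    have him2 : (d b).im / (2 * Real.pi) = (d a).im / (2 * Real.pi) := by
      apply int_valued_const hab (fun t => (d t).im / (2 * Real.pi))
      · exact (Complex.continuous_im.comp_continuousOn hd).div_const _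
      · intro t ht
        obtain ⟨k, hk⟩ := hint t ht
        refine ⟨k, ?_⟩
        rw [hk]
        simp [Complex.mul_im]
    field_simp at him2
    exact him2
  have h1 := hre b (right_mem_Icc.mpr hab)
  have h2 := hre a (left_mem_Icc.mpr hab)
  have him' : (d b).im = (d a).im := him
  exact Complex.ext (h1.trans h2.symm) him'

/-- Two lifts of the same loop have the same increment over `[0,1]`. -/
lemma liftdiff_unique (γ Λ Λ' : ℝ → ℂ)
    (hΛ : ContinuousOn Λ (Icc 0 1)) (hΛ' : ContinuousOn Λ' (Icc 0 1))
    (hl : ∀ t ∈ Icc (0:ℝ) 1, Complex.exp (Λ t) = γ t)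
    (hl' : ∀ t ∈ Icc (0:ℝ) 1, Complex.exp (Λ' t) = γ t) :
    Λ 1 - Λ 0 = Λ' 1 - Λ' 0 := by
  have key : ∀ t ∈ Icc (0:ℝ) 1, ∃ k : ℤ, Λ t - Λ' t = k * (2 * Real.pi * Complex.I) := by
    intro t ht
    have hγ : γ t ≠ 0 := (hl t ht) ▸ Complex.exp_ne_zero _
    have h1 : Complex.exp (Λ t - Λ' t) = 1 := by
      rw [Complex.exp_sub, hl t ht, hl' t ht, div_self hγ]
    rwa [Complex.exp_eq_one_iff] at h1
  have := two_pi_int_const (zero_le_one) (fun t => Λ t - Λ' t) (hΛ.sub hΛ') key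
  linear_combination this

lemma liftdiff_perturb (γ γ' Λ Λ' : ℝ → ℂ)
    (hcγ : Continuous γ) (hcγ' : Continuous γ')
    (hloop : γ 1 = γ 0) (hloop' : γ' 1 = γ' 0)
    (hΛc : ContinuousOn Λ (Icc 0 1)) (hΛ'c : ContinuousOn Λ' (Icc 0 1))
    (hl : ∀ t ∈ Icc (0:ℝ) 1, Complex.exp (Λ t) = γ t)
    (hl' : ∀ t ∈ Icc (0:ℝ) 1, Complex.exp (Λ' t) = γ' t)
    (hclose : ∀ t ∈ Icc (0:ℝ) 1, dist (γ' t) (γ t) < ‖γ t‖) :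
    Λ' 1 - Λ' 0 = Λ 1 - Λ 0 := by
  have hγ0 : ∀ t ∈ Icc (0:ℝ) 1, γ t ≠ 0 := by
    intro t ht h
    have := hclose t ht
    rw [h] at this
    simp only [norm_zero] at this
    exact absurd this (not_lt.mpr dist_nonneg)
  have hγ'0 : ∀ t ∈ Icc (0:ℝ) 1, γ' t ≠ 0 := by
    intro t ht h
    have := hclose t ht
    rw [h] at this
    rw [dist_comm, Complex.dist_eq] at this
    simp at this
  set q : ℝ → ℂ := fun t => γ' t / γ t with hq
  have hq0 : ∀ t ∈ Icc (0:ℝ) 1, q t ≠ 0 := fun t ht =>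
    div_ne_zero (hγ'0 t ht) (hγ0 t ht)
  have hkey : ∀ t ∈ Icc (0:ℝ) 1, ‖q t - 1‖ < 1 := by
    intro t ht
    have h1 : q t - 1 = (γ' t - γ t) / γ t := by
      have hne := hγ0 t ht
      rw [hq]
      field_simp
    rw [h1, norm_div, div_lt_one (norm_pos_iff.mpr (hγ0 t ht))]
    rw [← Complex.dist_eq]
    exact hclose t ht
  have hslit : ∀ t ∈ Icc (0:ℝ) 1, q t ∈ Complex.slitPlane := by
    intro t ht
    rw [Complex.mem_slitPlane_iff]
    left
    have h1 : (1 - q t).re ≤ ‖1 - q t‖ := Complex.re_le_norm _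
    have h2 : ‖1 - q t‖ < 1 := by
      rw [← norm_neg]; simpa using hkey t ht
    have h3 : (1 - q t).re = 1 - (q t).re := by simp
    linarith [h3 ▸ h1]
  set N : ℝ → ℂ := fun t => Complex.log (q t) with hN
  have hNc : ContinuousOn N (Icc 0 1) :=
    ContinuousOn.clog (hcγ'.continuousOn.div hcγ.continuousOn hγ0) hslit
  have hNl : ∀ t ∈ Icc (0:ℝ) 1, Complex.exp (N t) = q t := fun t ht =>
    Complex.exp_log (hq0 t ht)
  set M : ℝ → ℂ := fun t => Λ' t - Λ t with hM
  have hMl : ∀ t ∈ Icc (0:ℝ) 1, Complex.exp (M t) = q t := by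
    intro t ht
    rw [hM]
    simp only
    rw [Complex.exp_sub, hl t ht, hl' t ht]
  have huniq := liftdiff_unique q M N (hΛ'c.sub hΛc) hNc hMl hNl
  have hq10 : q 1 = q 0 := by simp only [hq, hloop, hloop']
  have hN10 : N 1 = N 0 := by simp only [hN, hq10]
  rw [hN10, sub_self] at huniq
  have : Λ' 1 - Λ 1 - (Λ' 0 - Λ 0) = 0 := huniq
  linear_combination this

lemma liftdiff_homotopy (H : ℝ → ℝ → ℂ)
    (hc : Continuous fun p : ℝ × ℝ => H p.1 p.2)
    (h0 : ∀ s t, H s t ≠ 0)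
    (hloop : ∀ s, H s 1 = H s 0)
    (Λ₀ Λ₁ : ℝ → ℂ)
    (hΛ₀c : ContinuousOn Λ₀ (Icc 0 1)) (hΛ₁c : ContinuousOn Λ₁ (Icc 0 1))
    (hl₀ : ∀ t ∈ Icc (0:ℝ) 1, Complex.exp (Λ₀ t) = H 0 t)
    (hl₁ : ∀ t ∈ Icc (0:ℝ) 1, Complex.exp (Λ₁ t) = H 1 t) :
    Λ₁ 1 - Λ₁ 0 = Λ₀ 1 - Λ₀ 0 := by
  have hcs : ∀ s, Continuous (H s) := fun s =>
    hc.comp (continuous_const.prodMk continuous_id)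
  have hex : ∀ s : ℝ, ∃ Λ : ℝ → ℂ, Continuous Λ ∧
      ∀ t ∈ Icc (0:ℝ) 1, Complex.exp (Λ t) = H s t :=
    fun s => exists_lift (H s) (hcs s) (h0 s)
  choose L hLc hLl using hex
  set W : ℝ → ℂ := fun s => L s 1 - L s 0 with hW
  -- minimum modulus over the unit square
  set K : Set (ℝ × ℝ) := Icc (0:ℝ) 1 ×ˢ Icc (0:ℝ) 1 with hK
  have hKc : IsCompact K := isCompact_Icc.prod isCompact_Icc
  have hKne : K.Nonempty :=
    ⟨(0,0), ⟨⟨le_rfl, zero_le_one⟩, ⟨le_rfl, zero_le_one⟩⟩⟩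
  obtain ⟨p₀, hp₀, hmin⟩ := hKc.exists_isMinOn hKne
    ((continuous_norm.comp hc).continuousOn)
  set m := ‖H p₀.1 p₀.2‖ with hm
  have hm0 : 0 < m := norm_pos_iff.mpr (h0 _ _)
  obtain ⟨δ, hδ0, hδ⟩ := Metric.uniformContinuousOn_iff.mp
    (hKc.uniformContinuousOn_of_continuous hc.continuousOn) m hm0
  -- one step of the chain
  have step : ∀ s ∈ Icc (0:ℝ) 1, ∀ s' ∈ Icc (0:ℝ) 1, dist s' s < δ → W s' = W s := by
    intro s hs s' hs' hss
    apply liftdiff_perturb (H s) (H s') (L s) (L s') (hcs s) (hcs s')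
      (hloop s) (hloop s') (hLc s).continuousOn (hLc s').continuousOn (hLl s) (hLl s')
    intro t ht
    have h1 : dist (H s' t) (H s t) < m := by
      refine hδ (s', t) ⟨hs', ht⟩ (s, t) ⟨hs, ht⟩ ?_
      rw [Prod.dist_eq]
      simp only [dist_self]
      rw [max_lt_iff]
      exact ⟨hss, hδ0⟩
    exact lt_of_lt_of_le h1 (hmin (⟨hs, ht⟩ : (s, t) ∈ K))
  obtain ⟨n, hn⟩ := exists_nat_gt (1/δ)
  have hn0 : (0:ℝ) < n := lt_trans (one_div_pos.mpr hδ0) hn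
  have hinv : (1:ℝ)/n < δ := by
    rw [div_lt_iff₀ hn0]
    have h1 : δ * (1/δ) < δ * n := mul_lt_mul_of_pos_left hn hδ0
    rw [mul_one_div, div_self (ne_of_gt hδ0)] at h1
    linarith
  have chain : ∀ k : ℕ, k ≤ n → W ((k:ℝ)/n) = W 0 := by
    intro k
    induction k with
    | zero => intro _; rw [Nat.cast_zero, zero_div]
    | succ k ih =>
        intro hk
        have hk' : k ≤ n := Nat.le_of_succ_le hk
        have h1 : ((k:ℝ)+1)/n ∈ Icc (0:ℝ) 1 := by
          constructor
          · positivity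
          · rw [div_le_one hn0]
            exact_mod_cast hk
        have h2 : ((k:ℝ))/n ∈ Icc (0:ℝ) 1 := by
          constructor
          · positivity
          · rw [div_le_one hn0]
            exact_mod_cast hk'
        have h3 : dist (((k:ℝ)+1)/n) ((k:ℝ)/n) < δ := by
          rw [Real.dist_eq]
          have : ((k:ℝ)+1)/n - (k:ℝ)/n = 1/n := by ring
          rw [this, _root_.abs_of_nonneg (by positivity)]
          exact hinv
        have := step _ h2 _ h1 h3
        push_cast at this ⊢
        rw [this]
        exact ih hk'
  have hW10 : W 1 = W 0 := by
    have := chain n le_rfl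
    rwa [div_self (ne_of_gt hn0)] at this
  have e1 : Λ₁ 1 - Λ₁ 0 = W 1 :=
    liftdiff_unique (H 1) Λ₁ (L 1) hΛ₁c (hLc 1).continuousOn hl₁ (hLl 1)
  have e0 : Λ₀ 1 - Λ₀ 0 = W 0 :=
    liftdiff_unique (H 0) Λ₀ (L 0) hΛ₀c (hLc 0).continuousOn hl₀ (hLl 0)
  rw [e1, e0, hW10]

/-- The standard loop on the unit circle. -/
noncomputable def E (t : ℝ) : ℂ := Complex.exp (((2 * Real.pi * t : ℝ) : ℂ) * Complex.I)

lemma E_continuous : Continuous E :=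
  Complex.continuous_exp.comp ((Complex.continuous_ofReal.comp (by continuity)).mul continuous_const)

lemma E_abs (t : ℝ) : ‖E t‖ = 1 := Complex.norm_exp_ofReal_mul_I _

lemma E_ne_zero (t : ℝ) : E t ≠ 0 := Complex.exp_ne_zero _

lemma E_mem_sphere (t : ℝ) : E t ∈ sphere (0:ℂ) 1 := by
  rw [mem_sphere_zero_iff_norm]
  exact E_abs t

lemma E_mem_ball (t : ℝ) : E t ∈ closedBall (0:ℂ) 1 := by
  rw [mem_closedBall_zero_iff, E_abs]

lemma E_one : E 1 = E 0 := by
  unfold E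
  have h1 : ((2 * Real.pi * 1 : ℝ) : ℂ) * Complex.I = 2 * Real.pi * Complex.I := by
    push_cast; ring
  have h0 : ((2 * Real.pi * 0 : ℝ) : ℂ) * Complex.I = 0 := by
    push_cast; ring
  rw [h1, h0, Complex.exp_two_pi_mul_I, Complex.exp_zero]

lemma E_half (t : ℝ) : E (t + 1/2) = - E t := by
  unfold E
  have : ((2 * Real.pi * (t + 1/2) : ℝ) : ℂ) * Complex.I
      = ((2 * Real.pi * t : ℝ) : ℂ) * Complex.I + (Real.pi : ℂ) * Complex.I := by
    push_cast
    ring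
  rw [this, Complex.exp_add, Complex.exp_pi_mul_I]
  ring

/-- Retraction of the plane onto the closed unit disk. -/
noncomputable def P (z : ℂ) : ℂ := ((max 1 ‖z‖ : ℝ) : ℂ)⁻¹ * z

lemma P_continuous : Continuous P := by
  apply Continuous.mul ?_ continuous_id
  apply Continuous.inv₀
  · exact Complex.continuous_ofReal.comp (continuous_const.max continuous_norm)
  · intro z
    have h1 : (1:ℝ) ≤ max 1 ‖z‖ := le_max_left _ _
    simp only [ne_eq, Complex.ofReal_eq_zero]
    linarith

lemma P_mem (z : ℂ) : P z ∈ closedBall (0:ℂ) 1 := by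
  rw [mem_closedBall_zero_iff]
  unfold P
  rw [norm_mul, norm_inv, Complex.norm_real, Real.norm_eq_abs]
  have h1 : (1:ℝ) ≤ max 1 ‖z‖ := le_max_left _ _
  rw [_root_.abs_of_nonneg (by linarith)]
  have h2 : ‖z‖ ≤ max 1 ‖z‖ := le_max_right _ _
  calc (max 1 ‖z‖)⁻¹ * ‖z‖
      ≤ (max 1 ‖z‖)⁻¹ * max 1 ‖z‖ := by
        apply mul_le_mul_of_nonneg_left h2
        positivity
  _ = 1 := inv_mul_cancel₀ (by linarith)

lemma P_id {z : ℂ} (hz : z ∈ closedBall (0:ℂ) 1) : P z = z := by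
  rw [mem_closedBall_zero_iff] at hz
  unfold P
  rw [max_eq_left hz]
  simp

/-- clamp to [0,1] -/
noncomputable def σc (s : ℝ) : ℝ := max 0 (min s 1)

lemma σc_continuous : Continuous σc := continuous_const.max (continuous_id.min continuous_const)
lemma σc_mem (s : ℝ) : σc s ∈ Icc (0:ℝ) 1 :=
  ⟨le_max_left _ _, max_le zero_le_one (min_le_right _ _)⟩
lemma σc_zero : σc 0 = 0 := by norm_num [σc]
lemma σc_one : σc 1 = 1 := by norm_num [σc]

/-- A set homeomorphic to the closed unit disk has nonempty interior
    (a special case of invariance of domain). -/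
theorem interior_nonempty_of_homeo_disk (Q : Set ℂ)
    (e : Q ≃ₜ (closedBall (0:ℂ) 1)) : (interior Q).Nonempty := by
  classical
  -- the parametrization of Q
  set f : ℂ → ℂ := fun z => ((e.symm ⟨P z, P_mem z⟩ : Q) : ℂ) with hf
  have hfc : Continuous f := by
    apply continuous_subtype_val.comp
    exact e.symm.continuous.comp (Continuous.subtype_mk P_continuous _)
  have hfQ : ∀ z, f z ∈ Q := fun z => (e.symm ⟨P z, P_mem z⟩).2
  have hfinj : Set.InjOn f (closedBall (0:ℂ) 1) := by
    intro z hz w hw h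
    have h1 : e.symm ⟨P z, P_mem z⟩ = e.symm ⟨P w, P_mem w⟩ := Subtype.coe_injective h
    have h2 : (⟨P z, P_mem z⟩ : closedBall (0:ℂ) 1) = ⟨P w, P_mem w⟩ :=
      e.symm.injective h1
    have h3 : P z = P w := congrArg Subtype.val h2
    rwa [P_id hz, P_id hw] at h3
  set x₀ : ℂ := f 0 with hx₀
  set fS : Set ℂ := f '' sphere (0:ℂ) 1 with hfS
  have hfSc : IsCompact fS := (isCompact_sphere 0 1).image hfc
  have hfSne : fS.Nonempty := ((NormedSpace.sphere_nonempty (x := (0:ℂ))).mpr zero_le_one).image f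
  have hx₀S : x₀ ∉ fS := by
    rintro ⟨z, hz, hfz⟩
    have hzb : z ∈ closedBall (0:ℂ) 1 := sphere_subset_closedBall hz
    have h0b : (0:ℂ) ∈ closedBall (0:ℂ) 1 := mem_closedBall_self zero_le_one
    have := hfinj hzb h0b hfz
    rw [this] at hz
    rw [mem_sphere_zero_iff_norm] at hz
    simp at hz
  set ρ : ℝ := infDist x₀ fS with hρdef
  have hρ : 0 < ρ := (hfSc.isClosed.notMem_iff_infDist_pos hfSne).mp hx₀S
  have hρle : ∀ t : ℝ, ρ ≤ ‖f (E t) - x₀‖ := by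
    intro t
    have h1 : f (E t) ∈ fS := ⟨E t, E_mem_sphere t, rfl⟩
    have := infDist_le_dist_of_mem (x := x₀) h1
    rwa [dist_comm, Complex.dist_eq] at this
  -- main claim : ball x₀ ρ ⊆ f '' closedBall 0 1
  have main : ball x₀ ρ ⊆ f '' closedBall (0:ℂ) 1 := by
    intro w₀ hw₀
    rw [mem_ball] at hw₀
    by_cases hwx : w₀ = x₀
    · exact ⟨0, mem_closedBall_self zero_le_one, by rw [hwx]⟩
    by_contra hw₀im
    -- the three loops
    set γx : ℝ → ℂ := fun t => f (E t) - x₀ with hγx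
    set γw : ℝ → ℂ := fun t => f (E t) - w₀ with hγw
    set h : ℝ → ℂ := fun t => f (E t) - f (- E t) with hh
    have hEmem : ∀ t, E t ∈ closedBall (0:ℂ) 1 := E_mem_ball
    have hmem2 : ∀ s t : ℝ, -((σc s : ℝ) : ℂ) * E t ∈ closedBall (0:ℂ) 1 := by
      intro s t
      rw [mem_closedBall_zero_iff, norm_mul, norm_neg,
        Complex.norm_real, Real.norm_eq_abs, E_abs, mul_one, _root_.abs_of_nonneg (σc_mem s).1]
      exact (σc_mem s).2
    have hmem3 : ∀ s t : ℝ, ((σc s : ℝ) : ℂ) * E t ∈ closedBall (0:ℂ) 1 := by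
      intro s t
      rw [mem_closedBall_zero_iff, norm_mul,
        Complex.norm_real, Real.norm_eq_abs, E_abs, mul_one, _root_.abs_of_nonneg (σc_mem s).1]
      exact (σc_mem s).2
    -- nonvanishing facts
    have hγx0 : ∀ t, γx t ≠ 0 := by
      intro t hzero
      rw [hγx] at hzero
      simp only [sub_eq_zero] at hzero
      have := hfinj (hEmem t) (mem_closedBall_self zero_le_one) hzero
      exact E_ne_zero t this
    have hγw0 : ∀ t, γw t ≠ 0 := by
      intro t hzero
      simp only [hγw, sub_eq_zero] at hzero
      exact hw₀im ⟨E t, hEmem t, hzero⟩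
    have hH₁0 : ∀ s t : ℝ, f (E t) - f (-((σc s : ℝ) : ℂ) * E t) ≠ 0 := by
      intro s t hzero
      rw [sub_eq_zero] at hzero
      have heq := hfinj (hEmem t) (hmem2 s t) hzero
      have : (1 + ((σc s : ℝ) : ℂ)) * E t = 0 := by
        linear_combination heq
      rcases mul_eq_zero.mp this with h1 | h1
      · have : (1 + σc s : ℝ) = 0 := by exact_mod_cast h1
        have := (σc_mem s).1
        linarith
      · exact E_ne_zero t h1
    -- lifts
    obtain ⟨Λh, hΛhc, hΛhl⟩ := exists_lift h
      ((hfc.comp E_continuous).sub (hfc.comp (E_continuous.neg)))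
      (by intro t
          have := hH₁0 1 t
          rwa [σc_one, Complex.ofReal_one, neg_mul, one_mul] at this)
    obtain ⟨Λx, hΛxc, hΛxl⟩ := exists_lift γx
      ((hfc.comp E_continuous).sub continuous_const) hγx0
    obtain ⟨Λw, hΛwc, hΛwl⟩ := exists_lift γw
      ((hfc.comp E_continuous).sub continuous_const) hγw0
    -- Step A : winding of h is odd, in particular nonzero
    have stepA : Λh 1 - Λh 0 ≠ 0 := by
      set c : ℝ → ℂ := fun t => Λh (t + 1/2) - Λh t - (Real.pi : ℂ) * Complex.I with hc
      have hmemIcc : ∀ t ∈ Icc (0:ℝ) (1/2), t ∈ Icc (0:ℝ) 1 := by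
        intro t ht
        exact ⟨ht.1, by linarith [ht.2]⟩
      have hmemIcc' : ∀ t ∈ Icc (0:ℝ) (1/2), t + 1/2 ∈ Icc (0:ℝ) 1 := by
        intro t ht
        constructor <;> [linarith [ht.1]; linarith [ht.2]]
      have hint : ∀ t ∈ Icc (0:ℝ) (1/2), ∃ k : ℤ, c t = k * (2 * Real.pi * Complex.I) := by
        intro t ht
        have h1 : Complex.exp (Λh (t + 1/2) - Λh t) = h (t + 1/2) / h t := by
          rw [Complex.exp_sub, hΛhl _ (hmemIcc' t ht), hΛhl _ (hmemIcc t ht)]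
        have h2 : h (t + 1/2) = - h t := by
          simp only [hh]
          rw [E_half t]
          have : - - E t = E t := neg_neg _
          rw [this]
          ring
        have h3 : h t ≠ 0 := by
          intro hzero
          have := hH₁0 1 t
          rw [σc_one, Complex.ofReal_one, neg_mul, one_mul] at this
          exact this hzero
        have h4 : Complex.exp (Λh (t + 1/2) - Λh t) = -1 := by
          rw [h1, h2, neg_div, div_self h3]
        have h5 : Complex.exp (c t) = 1 := by
          rw [hc]
          simp only
          rw [Complex.exp_sub, h4, Complex.exp_pi_mul_I]
          norm_num
        rwa [Complex.exp_eq_one_iff] at h5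
      have hcc : ContinuousOn c (Icc 0 (1/2)) := by
        apply ContinuousOn.sub ?_ continuousOn_const
        exact ((hΛhc.comp (continuous_id.add continuous_const)).continuousOn).sub
          hΛhc.continuousOn
      have hch := two_pi_int_const (by norm_num : (0:ℝ) ≤ 1/2) c hcc hint
      obtain ⟨k, hk⟩ := hint 0 ⟨le_rfl, by norm_num⟩
      have hsum : Λh 1 - Λh 0 = c (1/2) + c 0 + 2 * (Real.pi : ℂ) * Complex.I := by
        simp only [hc]
        norm_num
        ring
      rw [hch, hk] at hsum
      rw [hsum]
      have : (k:ℂ) * (2 * ↑Real.pi * Complex.I) + ↑k * (2 * ↑Real.pi * Complex.I)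
          + 2 * ↑Real.pi * Complex.I = (2*(k:ℂ)+1) * (2 * ↑Real.pi * Complex.I) := by ring
      rw [this]
      apply mul_ne_zero
      · intro hzero
        have : (2*(k:ℤ)+1 : ℤ) = 0 := by exact_mod_cast hzero
        omega
      · exact Complex.two_pi_I_ne_zero
    -- Step B : winding of γx equals winding of h
    have stepB : Λx 1 - Λx 0 = Λh 1 - Λh 0 := by
      have := liftdiff_homotopy
        (fun s t => f (E t) - f (-((σc s : ℝ) : ℂ) * E t))
        (by
          apply Continuous.sub
          · exact hfc.comp (E_continuous.comp continuous_snd)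
          · apply hfc.comp
            apply Continuous.mul
            · exact (Complex.continuous_ofReal.comp
                (σc_continuous.comp continuous_fst)).neg
            · exact E_continuous.comp continuous_snd)
        hH₁0
        (by intro s; simp only [E_one])
        Λx Λh hΛxc.continuousOn hΛhc.continuousOn
        (by
          intro t ht
          rw [hΛxl t ht]
          simp only [hγx, σc_zero, Complex.ofReal_zero, neg_zero, zero_mul, hx₀])
        (by
          intro t ht
          rw [hΛhl t ht]
          simp only [hh, σc_one, Complex.ofReal_one, neg_mul, one_mul])
      exact this.symm
    -- Step C : winding of γw equals winding of γx
    have stepC : Λw 1 - Λw 0 = Λx 1 - Λx 0 := by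
      apply liftdiff_perturb γx γw Λx Λw
        ((hfc.comp E_continuous).sub continuous_const)
        ((hfc.comp E_continuous).sub continuous_const)
        (by simp only [hγx, E_one]) (by simp only [hγw, E_one])
        hΛxc.continuousOn hΛwc.continuousOn hΛxl hΛwl
      intro t ht
      have h1 : γw t - γx t = x₀ - w₀ := by simp only [hγw, hγx]; ring
      rw [Complex.dist_eq, h1]
      calc ‖x₀ - w₀‖ = dist w₀ x₀ := by rw [dist_comm, Complex.dist_eq]
      _ < ρ := hw₀
      _ ≤ ‖γx t‖ := hρle t
    -- Step D : γw is null-homotopic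
    have stepD : Λw 1 - Λw 0 = 0 := by
      have hx₀w : x₀ - w₀ ≠ 0 := fun hzero => hwx (by linear_combination -hzero)
      have := liftdiff_homotopy
        (fun s t => f (((σc s : ℝ) : ℂ) * E t) - w₀)
        (by
          apply Continuous.sub ?_ continuous_const
          apply hfc.comp
          apply Continuous.mul
          · exact Complex.continuous_ofReal.comp (σc_continuous.comp continuous_fst)
          · exact E_continuous.comp continuous_snd)
        (by
          intro s t hzero
          rw [sub_eq_zero] at hzero
          exact hw₀im ⟨_, hmem3 s t, hzero⟩)
        (by intro s; simp only [E_one])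
        (fun _ => Complex.log (x₀ - w₀)) Λw
        continuousOn_const hΛwc.continuousOn
        (by
          intro t ht
          rw [Complex.exp_log hx₀w]
          simp only [σc_zero, Complex.ofReal_zero, zero_mul, hx₀])
        (by
          intro t ht
          rw [hΛwl t ht]
          simp only [hγw, σc_one, Complex.ofReal_one, one_mul])
      rw [this]
      ring
    rw [stepD] at stepC
    rw [stepB] at stepC
    exact stepA stepC.symm
  -- conclude
  have hsub : ball x₀ ρ ⊆ Q := fun w hw => by
    obtain ⟨z, _, rfl⟩ := main hw
    exact hfQ z
  exact ⟨x₀, interior_maximal hsub isOpen_ball (mem_ball_self hρ)⟩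

lemma a_ne_zero (g : DirectIsom) : g.a ≠ 0 := by
  intro h
  have := g.ha
  rw [h] at this
  simp at this

lemma apply_injective (g : DirectIsom) : Function.Injective g.apply := by
  intro z w h
  have : g.a * z = g.a * w := by
    have := h
    unfold DirectIsom.apply at this
    linear_combination this
  exact mul_left_cancel₀ (a_ne_zero g) this

lemma apply_continuous (g : DirectIsom) : Continuous g.apply := by
  unfold DirectIsom.apply
  continuity

lemma apply_dist (g : DirectIsom) (z w : ℂ) : dist (g.apply z) (g.apply w) = dist z w := by
  unfold DirectIsom.apply
  rw [Complex.dist_eq, Complex.dist_eq]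
  have : g.a * z + g.b - (g.a * w + g.b) = g.a * (z - w) := by ring
  rw [this, norm_mul, g.ha, one_mul]

/-- `g` as a homeomorphism of the plane. -/
def gHomeo (g : DirectIsom) : ℂ ≃ₜ ℂ where
  toFun := g.apply
  invFun := fun z => g.a⁻¹ * (z - g.b)
  left_inv := by
    intro z
    unfold DirectIsom.apply
    have := a_ne_zero g
    field_simp
    ring
  right_inv := by
    intro z
    unfold DirectIsom.apply
    have := a_ne_zero g
    field_simp
    ring
  continuous_toFun := apply_continuous g
  continuous_invFun := by
    apply Continuous.mul continuous_const
    exact continuous_id.sub continuous_const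

lemma image_interior (g : DirectIsom) (S : Set ℂ) :
    interior (g.image S) = g.apply '' interior S := by
  have h1 : g.image S = (gHomeo g) '' S := rfl
  have := (gHomeo g).image_interior S
  rw [h1, ← this]
  rfl

lemma volume_image (g : DirectIsom) (S : Set ℂ) (hS : MeasurableSet S) :
    volume (g.apply '' S) = volume S := by
  have hsplit : g.apply '' S = (fun z => z + g.b) '' ((fun z => g.a * z) '' S) := by
    rw [← Set.image_comp]
    rfl
  rw [hsplit]
  have hrotmeas : MeasurableSet ((fun z => g.a * z) '' S) := by
    have : (fun z => g.a * z) '' S = (gHomeo ⟨g.a, 0, g.ha⟩) '' S := by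
      simp [gHomeo, DirectIsom.apply]
    rw [this]
    exact (gHomeo ⟨g.a, 0, g.ha⟩).isOpenEmbedding.measurableEmbedding.measurableSet_image.mpr hS
  -- translation part
  have htrans : volume ((fun z => z + g.b) '' ((fun z => g.a * z) '' S))
      = volume ((fun z => g.a * z) '' S) := by
    set T := (fun z => g.a * z) '' S
    have h1 : (fun z => z + g.b) '' T = (fun z => z - g.b) ⁻¹' T := by
      ext z
      simp only [Set.mem_image, Set.mem_preimage]
      constructor
      · rintro ⟨x, hx, rfl⟩; simpa using hx
      · intro h; exact ⟨z - g.b, h, by ring⟩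
    rw [h1]
    exact (measurePreserving_sub_right volume g.b).measure_preimage
      hrotmeas.nullMeasurableSet
  rw [htrans]
  -- rotation part
  have ha' : g.a ∈ Submonoid.unitSphere ℂ := by
    simp [Submonoid.unitSphere, mem_sphere_iff_norm, g.ha]
  set c : Circle := ⟨g.a, ha'⟩
  have hca : (c : ℂ) = g.a := rfl
  have h1 : (fun z => g.a * z) '' S = ⇑(rotation c).symm ⁻¹' S := by
    ext z
    simp only [Set.mem_image, Set.mem_preimage]
    constructor
    · rintro ⟨x, hx, rfl⟩
      have h2 := (rotation c).symm_apply_apply x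
      rw [rotation_apply, hca] at h2
      rwa [h2]
    · intro h
      refine ⟨(rotation c).symm z, h, ?_⟩
      have h2 := (rotation c).apply_symm_apply z
      rwa [rotation_apply, hca] at h2
  rw [h1, (rotation c).symm.measurePreserving.measure_preimage hS.nullMeasurableSet]

/-- Pairwise disjoint sets of measure `≥ ε` inside a finite-measure set form a
finite family, with a cardinality bound. -/
lemma finite_of_disjoint (ε : ℝ≥0∞) (hε0 : 0 < ε) (hεtop : ε ≠ ⊤) (B : Set ℂ)
    (hB : volume B ≠ ⊤) (S : Set DirectIsom) (F : DirectIsom → Set ℂ)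
    (hm : ∀ g, MeasurableSet (F g)) (hd : S.Pairwise (Function.onFun Disjoint F))
    (hsub : ∀ g ∈ S, F g ⊆ B) (hεle : ∀ g, ε ≤ volume (F g)) :
    S.Finite ∧ (S.ncard : ℝ≥0∞) * ε ≤ volume B := by
  classical
  have key : ∀ t : Finset DirectIsom, ↑t ⊆ S → (t.card : ℝ≥0∞) * ε ≤ volume B := by
    intro t ht
    have hdisj : (↑t : Set DirectIsom).PairwiseDisjoint F := fun x hx y hy hxy =>
      hd (ht hx) (ht hy) hxy
    calc (t.card : ℝ≥0∞) * ε = ∑ _g ∈ t, ε := by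
          rw [Finset.sum_const, nsmul_eq_mul]
    _ ≤ ∑ g ∈ t, volume (F g) := Finset.sum_le_sum fun g _ => hεle g
    _ = volume (⋃ g ∈ t, F g) := (measure_biUnion_finset hdisj fun g _ => hm g).symm
    _ ≤ volume B := measure_mono (Set.iUnion₂_subset fun g hg => hsub g (ht hg))
  have hfin : S.Finite := by
    by_contra hinf
    replace hinf : S.Infinite := hinf
    have hdiv : volume B / ε ≠ ⊤ := (ENNReal.div_lt_top hB hε0.ne').ne
    obtain ⟨n, hn⟩ := ENNReal.exists_nat_gt hdiv
    have hlt : volume B < n * ε := by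
      rwa [ENNReal.div_lt_iff (Or.inl hε0.ne') (Or.inl hεtop)] at hn
    obtain ⟨t, hts, htc⟩ := hinf.exists_subset_card_eq n
    have := key t hts
    rw [htc] at this
    exact absurd (lt_of_le_of_lt this hlt) (lt_irrefl _)
  refine ⟨hfin, ?_⟩
  have := key hfin.toFinset (by rw [Set.Finite.coe_toFinset])
  rwa [Set.ncard_eq_toFinset_card _ hfin]

end NoTilingAux
end NoTilingAuxSection

set_option maxHeartbeats 1000000

open NoTilingAux Metric MeasureTheory Filter ENNReal in
/-- If a closed topological disk tile `Q` carries finitely many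
marked boundary features, with strictly more instances of the sub-shape `x`
(the set `Bx`) than of the complementary sub-shape `x'` (the set `Bx'`), and in
any tiling every `x` instance of a tile must coincide with an `x'` instance of
a neighboring tile (while `x` instances of distinct tiles can never coincide),
then no tiling of the plane by congruent copies of `Q` (rotations and
translations only) exists. -/
theorem no_tiling_of_surplus_marked_tile (Q : Set ℂ)
    (hdisk : Nonempty (Q ≃ₜ (Metric.closedBall (0 : ℂ) 1)))
    (Bx Bx' : Set ℂ) (hx : Bx ⊆ frontier Q) (hx' : Bx' ⊆ frontier Q)
    (hfin : Bx.Finite) (hfin' : Bx'.Finite) (hcount : Bx'.ncard < Bx.ncard) :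
    ¬ ∃ G : Set DirectIsom,
        (⋃ g ∈ G, g.image Q) = univ ∧
        (G.Pairwise fun g g' => Disjoint (interior (g.image Q)) (interior (g'.image Q))) ∧
        (G.Pairwise fun g g' => Disjoint (g.image Bx) (g'.image Bx)) ∧
        (∀ g ∈ G, ∀ p ∈ g.image Bx, ∃ g' ∈ G, g' ≠ g ∧ p ∈ g'.image Bx') := by
  rintro ⟨G, hcover, hintdisj, hdisjx, hmatch⟩
  classical
  obtain ⟨e⟩ := hdisk
  -- Q is compact
  have hQc : IsCompact Q := by
    have h1 : CompactSpace (Metric.closedBall (0:ℂ) 1) :=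
      isCompact_iff_compactSpace.mp (isCompact_closedBall _ _)
    have h2 : CompactSpace Q := e.symm.compactSpace
    exact isCompact_iff_compactSpace.mpr h2
  have hQclosed : IsClosed Q := hQc.isClosed
  obtain ⟨r₀', hr₀'⟩ := hQc.isBounded.subset_closedBall 0
  set r₀ : ℝ := max r₀' 1 with hr₀def
  have hr₀Q : Q ⊆ closedBall 0 r₀ :=
    hr₀'.trans (closedBall_subset_closedBall (le_max_left _ _))
  have hr₀1 : (1:ℝ) ≤ r₀ := le_max_right _ _
  have hr₀0 : (0:ℝ) ≤ r₀ := by linarith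
  -- interior of Q has positive finite measure
  have hQint : (interior Q).Nonempty := interior_nonempty_of_homeo_disk Q e
  set a : ℝ≥0∞ := volume (interior Q) with hadef
  have ha0 : 0 < a := isOpen_interior.measure_pos volume hQint
  have haT : a ≠ ⊤ := by
    have h1 : a ≤ volume (closedBall (0:ℂ) r₀) :=
      measure_mono (interior_subset.trans hr₀Q)
    exact (lt_of_le_of_lt h1 measure_closedBall_lt_top).ne
  -- tiles meeting a ball
  set GR : ℝ → Set DirectIsom := fun R => {g ∈ G | (g.image Q ∩ closedBall 0 R).Nonempty}
    with hGRdef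
  have hGRsub : ∀ R, GR R ⊆ G := fun R g hg => hg.1
  have hGRmono : ∀ R R', R ≤ R' → GR R ⊆ GR R' := by
    intro R R' hRR g hg
    obtain ⟨z, hz1, hz2⟩ := hg.2
    exact ⟨hg.1, z, hz1, closedBall_subset_closedBall hRR hz2⟩
  have htile_sub : ∀ R, ∀ g ∈ GR R, g.image Q ⊆ closedBall 0 (R + 2*r₀) := by
    intro R g hg z hz
    obtain ⟨y, hy1, hy2⟩ := hg.2
    obtain ⟨x, hxQ, rfl⟩ := hz
    obtain ⟨x', hx'Q, rfl⟩ := hy1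
    rw [mem_closedBall] at hy2 ⊢
    have h1 : dist (g.apply x) (g.apply x') = dist x x' := apply_dist g x x'
    have h2 : dist x x' ≤ 2 * r₀ := by
      have hx1 : dist x 0 ≤ r₀ := mem_closedBall.mp (hr₀Q hxQ)
      have hx2 : dist x' 0 ≤ r₀ := mem_closedBall.mp (hr₀Q hx'Q)
      calc dist x x' ≤ dist x 0 + dist 0 x' := dist_triangle _ _ _
      _ = dist x 0 + dist x' 0 := by rw [dist_comm 0 x']
      _ ≤ 2 * r₀ := by linarith
    calc dist (g.apply x) 0 ≤ dist (g.apply x) (g.apply x') + dist (g.apply x') 0 :=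
          dist_triangle _ _ _
    _ ≤ 2*r₀ + R := by rw [h1]; linarith
    _ = R + 2*r₀ := by ring
  -- finiteness and the measure bound
  have hfinbound : ∀ R : ℝ, (GR R).Finite ∧
      ((GR R).ncard : ℝ≥0∞) * a ≤ volume (closedBall (0:ℂ) (R + 2*r₀)) := by
    intro R
    apply finite_of_disjoint a ha0 haT (closedBall (0:ℂ) (R + 2*r₀))
      measure_closedBall_lt_top.ne (GR R) (fun g => interior (g.image Q))
      (fun g => isOpen_interior.measurableSet)
    · intro g hg g' hg' hne
      exact hintdisj (hGRsub R hg) (hGRsub R hg') hne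
    · intro g hg
      exact interior_subset.trans (htile_sub R g hg)
    · intro g
      rw [image_interior g Q, volume_image g (interior Q) isOpen_interior.measurableSet]
  -- x and x' points are inside the tile
  have hBxQ : Bx ⊆ Q := hx.trans hQclosed.frontier_subset
  have hBx'Q : Bx' ⊆ Q := hx'.trans hQclosed.frontier_subset
  set n : ℕ := Bx.ncard with hndef
  set n' : ℕ := Bx'.ncard with hn'def
  -- main counting step
  have hstep : ∀ R : ℝ, (GR R).ncard * n ≤ (GR (R + 2*r₀)).ncard * n' := by
    intro R
    set F1 : Finset DirectIsom := (hfinbound R).1.toFinset with hF1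
    set F2 : Finset DirectIsom := (hfinbound (R + 2*r₀)).1.toFinset with hF2
    set U : Finset ℂ := F1.biUnion (fun g => (hfin.image g.apply).toFinset) with hU
    set V : Finset ℂ := F2.biUnion (fun g => (hfin'.image g.apply).toFinset) with hV
    have hcardU : U.card = F1.card * n := by
      rw [hU, Finset.card_biUnion]
      · have : ∀ g ∈ F1, (hfin.image g.apply).toFinset.card = n := by
          intro g _
          rw [← Set.ncard_eq_toFinset_card _ (hfin.image g.apply)]
          exact Set.ncard_image_of_injective Bx (apply_injective g)
        rw [Finset.sum_congr rfl this, Finset.sum_const, smul_eq_mul]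
      · intro g hg g' hg' hne
        have hdis := hdisjx (hGRsub R ((hfinbound R).1.mem_toFinset.mp hg))
          (hGRsub R ((hfinbound R).1.mem_toFinset.mp hg')) hne
        rw [Function.onFun, Finset.disjoint_left]
        intro p hp hp'
        rw [Set.Finite.mem_toFinset] at hp hp'
        exact (Set.disjoint_left.mp hdis) hp hp'
    have hUV : U ⊆ V := by
      intro p hp
      rw [hU, Finset.mem_biUnion] at hp
      obtain ⟨g, hgF1, hpg⟩ := hp
      rw [Set.Finite.mem_toFinset] at hpg
      have hgGR : g ∈ GR R := (hfinbound R).1.mem_toFinset.mp hgF1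
      obtain ⟨g', hg'G, hg'ne, hpg'⟩ := hmatch g (hGRsub R hgGR) p hpg
      have hpball : p ∈ closedBall (0:ℂ) (R + 2*r₀) := by
        apply htile_sub R g hgGR
        exact Set.image_mono (f := g.apply) hBxQ hpg
      have hg'GR : g' ∈ GR (R + 2*r₀) := by
        refine ⟨hg'G, p, ?_, hpball⟩
        exact Set.image_mono (f := g'.apply) hBx'Q hpg'
      rw [hV, Finset.mem_biUnion]
      exact ⟨g', (hfinbound (R + 2*r₀)).1.mem_toFinset.mpr hg'GR,
        (hfin'.image g'.apply).mem_toFinset.mpr hpg'⟩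
    have hcardV : V.card ≤ F2.card * n' := by
      calc V.card ≤ ∑ g ∈ F2, (hfin'.image g.apply).toFinset.card :=
            Finset.card_biUnion_le
      _ = ∑ _g ∈ F2, n' := by
          apply Finset.sum_congr rfl
          intro g _
          rw [← Set.ncard_eq_toFinset_card _ (hfin'.image g.apply)]
          exact Set.ncard_image_of_injective Bx' (apply_injective g)
      _ = F2.card * n' := by rw [Finset.sum_const, smul_eq_mul]
    have h1 : (GR R).ncard = F1.card := Set.ncard_eq_toFinset_card _ (hfinbound R).1
    have h2 : (GR (R + 2*r₀)).ncard = F2.card :=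
      Set.ncard_eq_toFinset_card _ (hfinbound (R + 2*r₀)).1
    rw [h1, h2, ← hcardU]
    exact le_trans (Finset.card_le_card hUV) hcardV
  -- a tile containing the origin
  have h0mem : (0:ℂ) ∈ ⋃ g ∈ G, g.image Q := by rw [hcover]; trivial
  rw [Set.mem_iUnion₂] at h0mem
  obtain ⟨g₀, hg₀G, hg₀0⟩ := h0mem
  have hbase : 1 ≤ (GR 1).ncard := by
    have hg₀GR : g₀ ∈ GR 1 := ⟨hg₀G, 0, hg₀0, mem_closedBall_self zero_le_one⟩
    have := Set.ncard_pos (hfinbound 1).1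
    exact this.mpr ⟨g₀, hg₀GR⟩
  -- n' ≥ 1
  have hn'pos : 1 ≤ n' := by
    by_contra hn'0
    push_neg at hn'0
    interval_cases n'
    have hBx'empty : Bx' = ∅ := (Set.ncard_eq_zero hfin').mp hn'def.symm
    have hBxne : Bx.Nonempty := by
      apply Set.nonempty_of_ncard_ne_zero
      omega
    obtain ⟨x, hxBx⟩ := hBxne
    obtain ⟨g', _, _, hpg'⟩ := hmatch g₀ hg₀G (g₀.apply x) ⟨x, hxBx, rfl⟩
    rw [hBx'empty] at hpg'
    simp [DirectIsom.image] at hpg'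
  have hn'n : n' + 1 ≤ n := hcount
  -- the iterated counts
  set N : ℕ → ℕ := fun k => (GR (1 + 2*r₀*k)).ncard with hNdef
  have hrec : ∀ k : ℕ, N k * n ≤ N (k+1) * n' := by
    intro k
    have harg : (1 + 2*r₀*k) + 2*r₀ = 1 + 2*r₀*(k+1 : ℕ) := by push_cast; ring
    have := hstep (1 + 2*r₀*k)
    rwa [harg] at this
  have hgrow : ∀ k : ℕ, (n'+1)^k ≤ N k * n'^k := by
    intro k
    induction k with
    | zero =>
        simp only [pow_zero, mul_one]
        have : (1:ℝ) + 2*r₀*(0:ℕ) = 1 := by push_cast; ring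
        rw [hNdef]
        simp only [this]
        exact hbase
    | succ k ih =>
        calc (n'+1)^(k+1) = (n'+1)^k * (n'+1) := by ring
        _ ≤ (N k * n'^k) * (n'+1) := Nat.mul_le_mul_right _ ih
        _ ≤ (N k * n'^k) * n := Nat.mul_le_mul_left _ hn'n
        _ = (N k * n) * n'^k := by ring
        _ ≤ (N (k+1) * n') * n'^k := Nat.mul_le_mul_right _ (hrec k)
        _ = N (k+1) * n'^(k+1) := by ring
  -- real-valued bounds
  set α : ℝ := a.toReal with hαdef
  have hα : 0 < α := ENNReal.toReal_pos ha0.ne' haT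
  have hreal : ∀ k : ℕ, (N k : ℝ) * α ≤ (1 + 2*r₀*k + 2*r₀)^2 * Real.pi := by
    intro k
    have h1 := (hfinbound (1 + 2*r₀*k)).2
    rw [Complex.volume_closedBall] at h1
    have hr : (0:ℝ) ≤ 1 + 2*r₀*k + 2*r₀ := by positivity
    have hRHSne : (ENNReal.ofReal (1 + 2*r₀*k + 2*r₀)) ^ 2 * (NNReal.pi : ℝ≥0∞) ≠ ⊤ := by
      apply ENNReal.mul_ne_top
      · exact (ENNReal.pow_ne_top ENNReal.ofReal_ne_top)
      · exact ENNReal.coe_ne_top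
    have h2 := ENNReal.toReal_mono hRHSne h1
    rw [ENNReal.toReal_mul, ENNReal.toReal_mul, ENNReal.toReal_pow,
      ENNReal.toReal_ofReal hr, ENNReal.toReal_natCast, ENNReal.coe_toReal] at h2
    have hpi : (NNReal.pi : ℝ) = Real.pi := rfl
    rw [hpi] at h2
    exact h2
  -- the geometric growth beats the quadratic bound
  set q : ℝ := ((n':ℝ)+1)/(n':ℝ) with hqdef
  have hn'R : (0:ℝ) < n' := by exact_mod_cast hn'pos
  have hq1 : 1 < q := by
    rw [hqdef, lt_div_iff₀ hn'R]
    linarith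
  have hq0 : 0 < q := lt_trans one_pos hq1
  have hqN : ∀ k : ℕ, q^k ≤ (N k : ℝ) := by
    intro k
    have h1 : ((n'+1 : ℕ) : ℝ)^k ≤ ((N k * n'^k : ℕ) : ℝ) := by exact_mod_cast hgrow k
    push_cast at h1
    rw [hqdef, div_pow, div_le_iff₀ (by positivity)]
    linarith [h1]
  set r : ℝ := q⁻¹ with hrdef
  have hr0 : 0 < r := inv_pos.mpr hq0
  have hr1 : r < 1 := inv_lt_one_of_one_lt₀ hq1
  have hrq : ∀ k : ℕ, q^k * r^k = 1 := by
    intro k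
    rw [hrdef, ← mul_pow, mul_inv_cancel₀ (ne_of_gt hq0), one_pow]
  have hcontr : ∀ k : ℕ, α ≤ ((1 + 2*r₀*k + 2*r₀)^2 * Real.pi) * r^k := by
    intro k
    have h1 : α * q^k ≤ (N k : ℝ) * α := by
      rw [mul_comm (N k : ℝ) α]
      exact mul_le_mul_of_nonneg_left (hqN k) hα.le
    have h2 : α * q^k ≤ (1 + 2*r₀*k + 2*r₀)^2 * Real.pi := le_trans h1 (hreal k)
    have h3 := mul_le_mul_of_nonneg_right h2 (le_of_lt (pow_pos hr0 k))
    rw [mul_assoc, hrq k, mul_one] at h3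
    exact h3
  -- tendsto 0
  have hnorm : ‖r‖ < 1 := by rwa [Real.norm_eq_abs, _root_.abs_of_pos hr0]
  have t0 : Tendsto (fun k : ℕ => r^k) atTop (nhds 0) :=
    tendsto_pow_atTop_nhds_zero_of_lt_one hr0.le hr1
  have t1 : Tendsto (fun k : ℕ => (k:ℝ) * r^k) atTop (nhds 0) := by
    have := (summable_pow_mul_geometric_of_norm_lt_one 1 hnorm).tendsto_atTop_zero
    simpa using this
  have t2 : Tendsto (fun k : ℕ => (k:ℝ)^2 * r^k) atTop (nhds 0) :=
    (summable_pow_mul_geometric_of_norm_lt_one 2 hnorm).tendsto_atTop_zero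
  have hT : Tendsto (fun k : ℕ => ((1 + 2*r₀*k + 2*r₀)^2 * Real.pi) * r^k) atTop (nhds 0) := by
    have hsum := ((t0.const_mul ((1+2*r₀)^2 * Real.pi)).add
      (t1.const_mul (2*(1+2*r₀)*(2*r₀)*Real.pi))).add (t2.const_mul ((2*r₀)^2*Real.pi))
    rw [show (1+2*r₀)^2 * Real.pi * 0 + 2*(1+2*r₀)*(2*r₀)*Real.pi * 0
        + (2*r₀)^2*Real.pi * 0 = (0:ℝ) by ring] at hsum
    convert hsum using 2 with k
    ring
  have hev : ∀ᶠ k : ℕ in atTop,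
      ((1 + 2*r₀*k + 2*r₀)^2 * Real.pi) * r^k < α := hT.eventually (gt_mem_nhds hα)
  obtain ⟨k, hk⟩ := hev.exists
  exact absurd (lt_of_le_of_lt (hcontr k) hk) (lt_irrefl _)
end
end

section
/- In the tiling of the plane by regular hexagons of side L (honeycomb lattice), where each hexagon is subdivided into three L×L rhombi meeting at the center, and each rhombus into L parallel 1×L parallelograms, the symmetry group of the resulting tiling acts on the parallelogram tiles with exactly ⌊(L+1)/2⌋ orbits. -/
open Complex Set

noncomputable section

lemma uvec_eq : uvec = ((1/2 : ℝ) : ℂ) + ((Real.sqrt 3 / 2 : ℝ) : ℂ) * Complex.I := by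
  rw [uvec, Complex.exp_mul_I, ← Complex.ofReal_cos, ← Complex.ofReal_sin,
    Real.cos_pi_div_three, Real.sin_pi_div_three]

lemma u_re : uvec.re = 1/2 := by simp [uvec_eq]
lemma u_im : uvec.im = Real.sqrt 3 / 2 := by simp [uvec_eq]

lemma sqrt3_sq : ((Real.sqrt 3 : ℝ) : ℂ)^2 = 3 := by
  norm_cast
  rw [Real.sq_sqrt]; norm_num

lemma hu2 : uvec^2 = uvec - 1 := by
  rw [uvec_eq]; push_cast
  linear_combination (Complex.I^2/4) * sqrt3_sq + (3/4) * Complex.I_sq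

lemma hu3 : uvec^3 = -1 := by
  have h : uvec^3 = uvec * uvec^2 := by ring
  rw [h, hu2]; rw [mul_sub, mul_one, ← pow_two, hu2]; ring
lemma hu4 : uvec^4 = -uvec := by
  have h : uvec^4 = uvec * uvec^3 := by ring
  rw [h, hu3]; ring
lemma hu6 : uvec^6 = 1 := by
  have h : uvec^6 = (uvec^3)^2 := by ring
  rw [h, hu3]; ring
lemma hu8 : uvec^8 = uvec - 1 := by
  have h : uvec^8 = uvec^6 * uvec^2 := by ring
  rw [h, hu6, hu2]; ring

lemma habs : ‖uvec‖ = 1 := Complex.norm_exp_ofReal_mul_I _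

lemma u_ne : uvec ≠ 0 := by
  intro h
  have h2 := habs
  rw [h] at h2; simp at h2

lemma sqrt3_pos : (0:ℝ) < Real.sqrt 3 := Real.sqrt_pos.mpr (by norm_num)

lemma u_indep (r s : ℝ) (h : (r:ℂ) + (s:ℂ) * uvec = 0) : r = 0 ∧ s = 0 := by
  have him := congrArg Complex.im h
  simp only [Complex.add_im, Complex.mul_im, Complex.ofReal_im, Complex.ofReal_re,
    u_im, u_re, Complex.zero_im] at him
  have hs : s = 0 := by
    have : s * (Real.sqrt 3 / 2) = 0 := by linarith
    rcases mul_eq_zero.mp this with h' | h'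
    · exact h'
    · exact absurd h' (by positivity)
  subst hs
  simp at h
  exact ⟨by exact_mod_cast h, rfl⟩





-- group structure
lemma DirectIsom.a_ne (g : DirectIsom) : g.a ≠ 0 := by
  intro h
  have := g.ha
  rw [h] at this; simp at this

def DirectIsom.comp (g h : DirectIsom) : DirectIsom :=
  ⟨g.a * h.a, g.a * h.b + g.b, by rw [norm_mul, g.ha, h.ha, one_mul]⟩

def DirectIsom.inv (g : DirectIsom) : DirectIsom :=
  ⟨g.a⁻¹, -(g.a⁻¹ * g.b), by rw [norm_inv, g.ha, inv_one]⟩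

lemma DirectIsom.comp_apply (g h : DirectIsom) (z : ℂ) :
    (g.comp h).apply z = g.apply (h.apply z) := by
  simp only [comp, apply]; ring

lemma DirectIsom.image_comp (g h : DirectIsom) (S : Set ℂ) :
    (g.comp h).image S = g.image (h.image S) := by
  simp only [image, Set.image_image]
  exact Set.image_congr' (fun z => (g.comp_apply h z))

lemma DirectIsom.inv_apply_apply (g : DirectIsom) (z : ℂ) :
    g.inv.apply (g.apply z) = z := by
  simp only [inv, apply]
  have := g.a_ne
  field_simp
  ring

lemma DirectIsom.apply_inv_apply (g : DirectIsom) (z : ℂ) :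
    g.apply (g.inv.apply z) = z := by
  simp only [inv, apply]
  have := g.a_ne
  field_simp
  ring

lemma DirectIsom.image_inv_image (g : DirectIsom) (S : Set ℂ) :
    g.inv.image (g.image S) = S := by
  simp only [image, Set.image_image]
  have : (fun z => g.inv.apply (g.apply z)) = fun z => z :=
    funext fun z => g.inv_apply_apply z
  rw [this, Set.image_id']

lemma DirectIsom.image_image_inv (g : DirectIsom) (S : Set ℂ) :
    g.image (g.inv.image S) = S := by
  simp only [image, Set.image_image]
  have : (fun z => g.apply (g.inv.apply z)) = fun z => z :=
    funext fun z => g.apply_inv_apply z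
  rw [this, Set.image_id']

lemma inv_image_of_image_eq (g : DirectIsom) {s t : Set ℂ} (h : g.image s = t) :
    g.inv.image t = s := by rw [← h, g.image_inv_image]

def idIsom : DirectIsom := ⟨1, 0, by simp⟩

lemma idIsom_image (S : Set ℂ) : idIsom.image S = S := by
  unfold idIsom DirectIsom.image DirectIsom.apply
  simp

lemma sym_id (T : Set (Set ℂ)) : IsSymmetry T idIsom := by
  unfold IsSymmetry
  have : (fun t => idIsom.image t) = fun t => t := funext fun t => idIsom_image t
  rw [this, Set.image_id']

lemma sym_comp {T : Set (Set ℂ)} {g h : DirectIsom} (hg : IsSymmetry T g)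
    (hh : IsSymmetry T h) : IsSymmetry T (g.comp h) := by
  unfold IsSymmetry at *
  have : (fun t => (g.comp h).image t) = (fun t => g.image t) ∘ (fun t => h.image t) :=
    funext fun t => g.image_comp h t
  rw [this, Set.image_comp, hh, hg]

lemma sym_inv {T : Set (Set ℂ)} {g : DirectIsom} (hg : IsSymmetry T g) :
    IsSymmetry T g.inv := by
  unfold IsSymmetry at *
  conv_lhs => rw [← hg]
  rw [← Set.image_comp]
  have : ((fun t => g.inv.image t) ∘ fun t => g.image t) = fun t => t :=
    funext fun t => g.image_inv_image t
  rw [this, Set.image_id']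

lemma mem_of_sym {T : Set (Set ℂ)} {g : DirectIsom} (hg : IsSymmetry T g)
    {t : Set ℂ} (ht : t ∈ T) : g.image t ∈ T := by
  have : g.image t ∈ (fun t => g.image t) '' T := Set.mem_image_of_mem _ ht
  rwa [hg] at this

theorem DirectIsom.ext' {g g' : DirectIsom} (h1 : g.a = g'.a) (h2 : g.b = g'.b) :
    g = g' := by
  cases g; cases g'; simp_all

lemma sym_congr {T : Set (Set ℂ)} {g g' : DirectIsom} (h1 : g.a = g'.a)
    (h2 : g.b = g'.b) (h : IsSymmetry T g') : IsSymmetry T g := by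
  rw [DirectIsom.ext' h1 h2]; exact h

-- ### The F machinery
def F (L : ℕ) (α β : ℂ) : Set ℂ := (fun z => α * z + β) '' Para L

lemma image_F (g : DirectIsom) (L : ℕ) (α β : ℂ) :
    g.image (F L α β) = F L (g.a * α) (g.a * β + g.b) := by
  simp only [F, DirectIsom.image, Set.image_image]
  exact Set.image_congr' (fun z => by simp only [DirectIsom.apply]; ring)

lemma mem_Para_zero (L : ℕ) : (0:ℂ) ∈ Para L := by
  refine ⟨0, 0, ⟨le_refl _, by positivity⟩, ⟨le_refl _, by norm_num⟩, by simp⟩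

lemma mem_Para_D (L : ℕ) : ((L:ℂ) + uvec) ∈ Para L := by
  refine ⟨L, 1, ⟨by positivity, le_refl _⟩, ⟨by norm_num, le_refl _⟩, by push_cast; ring⟩

lemma halfturn_para (L : ℕ) :
    (fun z => -z + ((L:ℂ) + uvec)) '' Para L = Para L := by
  ext z
  constructor
  · rintro ⟨w, ⟨s, t, hs, ht, rfl⟩, rfl⟩
    refine ⟨(L:ℝ) - s, 1 - t, ⟨by linarith [hs.2], by linarith [hs.1]⟩,
      ⟨by linarith [ht.2], by linarith [ht.1]⟩, by push_cast; ring⟩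
  · rintro ⟨s, t, hs, ht, rfl⟩
    refine ⟨((L:ℝ) - s : ℝ) + ((1 - t : ℝ)) * uvec,
      ⟨(L:ℝ) - s, 1 - t, ⟨by linarith [hs.2], by linarith [hs.1]⟩,
        ⟨by linarith [ht.2], by linarith [ht.1]⟩, rfl⟩, by push_cast; ring⟩

lemma F_halfturn (L : ℕ) (α β : ℂ) :
    F L α β = F L (-α) (α * ((L:ℂ) + uvec) + β) := by
  conv_lhs => rw [F, ← halfturn_para L, Set.image_image]
  exact Set.image_congr' (fun z => by ring)

-- ### normSq computations
lemma normSq_su (σ τ : ℝ) :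
    Complex.normSq ((σ:ℂ) + (τ:ℂ) * uvec) = σ^2 + σ*τ + τ^2 := by
  rw [Complex.normSq_apply]
  simp only [Complex.add_re, Complex.add_im, Complex.mul_re, Complex.mul_im,
    Complex.ofReal_re, Complex.ofReal_im, u_re, u_im]
  have h3 : Real.sqrt 3 ^ 2 = 3 := Real.sq_sqrt (by norm_num)
  nlinarith [h3]

lemma normSq_D (L : ℕ) : Complex.normSq ((L:ℂ) + uvec) = (L:ℝ)^2 + L + 1 := by
  have := normSq_su (L:ℝ) 1
  push_cast at this ⊢
  simpa using this

lemma D_ne (L : ℕ) : ((L:ℂ) + uvec) ≠ 0 := by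
  intro h
  have := congrArg Complex.re h
  simp only [Complex.add_re, Complex.natCast_re, u_re, Complex.zero_re] at this
  have hL : (0:ℝ) ≤ (L:ℝ) := by positivity
  linarith

set_option maxHeartbeats 1000000 in
lemma para_maxpair {L : ℕ} (hL : 1 < L) {x y : ℂ} (hx : x ∈ Para L) (hy : y ∈ Para L)
    (h : Complex.normSq (x - y) = (L:ℝ)^2 + L + 1) :
    (x = (L:ℂ) + uvec ∧ y = 0) ∨ (y = (L:ℂ) + uvec ∧ x = 0) := by
  obtain ⟨s, t, ⟨hs1, hs2⟩, ⟨ht1, ht2⟩, rfl⟩ := hx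
  obtain ⟨s', t', ⟨hs1', hs2'⟩, ⟨ht1', ht2'⟩, rfl⟩ := hy
  have hdiff : ((s:ℂ) + t*uvec) - ((s':ℂ) + t'*uvec)
      = ((s - s' : ℝ):ℂ) + ((t - t' : ℝ):ℂ) * uvec := by push_cast; ring
  rw [hdiff, normSq_su] at h
  have hLR : (1:ℝ) < (L:ℝ) := by exact_mod_cast hL
  have h1 : 0 ≤ ((L:ℝ) - (s - s')) * (1 - (t - t')) :=
    mul_nonneg (by linarith) (by linarith)
  have h2 : 0 ≤ ((L:ℝ) + (s - s')) * (1 + (t - t')) :=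
    mul_nonneg (by linarith) (by linarith)
  have h3 : 0 ≤ ((L:ℝ) - (s - s')) * (1 + (t - t')) :=
    mul_nonneg (by linarith) (by linarith)
  have h4 : 0 ≤ ((L:ℝ) + (s - s')) * (1 - (t - t')) :=
    mul_nonneg (by linarith) (by linarith)
  have c1 : 0 ≤ (L:ℝ)^2 - (s - s')^2 := by nlinarith
  have c2 : 0 ≤ (1:ℝ) - (t - t')^2 := by nlinarith
  have c3 : 0 ≤ (L:ℝ) - (s - s')*(t - t') := by nlinarith
  have e1 : (s - s')^2 = (L:ℝ)^2 := by linarith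
  have e2 : (t - t')^2 = 1 := by linarith
  have e3 : (s - s')*(t - t') = L := by linarith
  have hσcases : s - s' = L ∨ s - s' = -(L:ℝ) := by
    have hz : ((s - s') - L) * ((s - s') + L) = 0 := by nlinarith
    rcases mul_eq_zero.mp hz with h' | h'
    · left; linarith
    · right; linarith
  have hτcases : t - t' = 1 ∨ t - t' = -(1:ℝ) := by
    have hz : ((t - t') - 1) * ((t - t') + 1) = 0 := by nlinarith
    rcases mul_eq_zero.mp hz with h' | h'
    · left; linarith
    · right; linarith
  rcases hσcases with hσ | hσ
  · have hτ : t - t' = 1 := by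
      rcases hτcases with hτ | hτ
      · exact hτ
      · rw [hσ, hτ] at e3; linarith
    left
    constructor
    · have e : s = L ∧ t = 1 := ⟨by linarith, by linarith⟩
      rw [e.1, e.2]; push_cast; ring
    · have e : s' = 0 ∧ t' = 0 := ⟨by linarith, by linarith⟩
      rw [e.1, e.2]; push_cast; ring
  · have hτ : t - t' = -1 := by
      rcases hτcases with hτ | hτ
      · rw [hσ, hτ] at e3; linarith
      · exact hτ
    right
    constructor
    · have e : s' = L ∧ t' = 1 := ⟨by linarith, by linarith⟩
      rw [e.1, e.2]; push_cast; ring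
    · have e : s = 0 ∧ t = 0 := ⟨by linarith, by linarith⟩
      rw [e.1, e.2]; push_cast; ring

set_option maxHeartbeats 1000000 in
lemma para_maxbound {L : ℕ} {x y : ℂ} (hx : x ∈ Para L) (hy : y ∈ Para L) :
    Complex.normSq (x - y) ≤ (L:ℝ)^2 + L + 1 := by
  obtain ⟨s, t, hs, ht, rfl⟩ := hx
  obtain ⟨s', t', hs', ht', rfl⟩ := hy
  have hdiff : ((s:ℂ) + t*uvec) - ((s':ℂ) + t'*uvec)
      = ((s - s' : ℝ):ℂ) + ((t - t' : ℝ):ℂ) * uvec := by push_cast; ring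
  rw [hdiff, normSq_su]
  cases hs; cases hs'; cases ht; cases ht'
  nlinarith [mul_nonneg (by linarith : (0:ℝ) ≤ (L:ℝ) - (s - s'))
      (by linarith : (0:ℝ) ≤ 1 - (t - t')),
    mul_nonneg (by linarith : (0:ℝ) ≤ (L:ℝ) + (s - s'))
      (by linarith : (0:ℝ) ≤ 1 + (t - t')),
    mul_nonneg (by linarith : (0:ℝ) ≤ (L:ℝ) - (s - s'))
      (by linarith : (0:ℝ) ≤ 1 + (t - t')),
    mul_nonneg (by linarith : (0:ℝ) ≤ (L:ℝ) + (s - s'))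
      (by linarith : (0:ℝ) ≤ 1 - (t - t'))]

/-- Rigidity: a direct isometry mapping the parallelogram onto itself is the
identity or the half-turn. -/
lemma para_rigid {L : ℕ} (hL : 1 < L) {a b : ℂ} (ha : ‖a‖ = 1)
    (h : (fun z => a * z + b) '' Para L = Para L) :
    (a = 1 ∧ b = 0) ∨ (a = -1 ∧ b = (L:ℂ) + uvec) := by
  set D : ℂ := (L:ℂ) + uvec with hD
  have hb : b ∈ Para L := by
    have : a * 0 + b ∈ (fun z => a * z + b) '' Para L :=
      Set.mem_image_of_mem _ (mem_Para_zero L)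
    rw [h] at this; simpa using this
  have haD : a * D + b ∈ Para L := by
    have : a * D + b ∈ (fun z => a * z + b) '' Para L :=
      Set.mem_image_of_mem _ (mem_Para_D L)
    rwa [h] at this
  have hnormSq : Complex.normSq ((a * D + b) - b) = (L:ℝ)^2 + L + 1 := by
    have : (a * D + b) - b = a * D := by ring
    rw [this, Complex.normSq_mul, ← Complex.sq_norm a, ha]
    rw [normSq_D]
    norm_num
  rcases para_maxpair hL haD hb hnormSq with ⟨h1, h2⟩ | ⟨h1, h2⟩
  · left
    rw [h2, add_zero] at h1
    refine ⟨?_, h2⟩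
    have := mul_right_cancel₀ (D_ne L) (by rw [h1, one_mul] : a * D = 1 * D)
    exact this
  · right
    refine ⟨?_, h1⟩
    have hD2 : a * D = -D := by rw [h1] at h2; linear_combination h2
    have : a * D = (-1) * D := by rw [hD2]; ring
    exact mul_right_cancel₀ (D_ne L) this

lemma affine_image_eq {L : ℕ} {α β α' β' : ℂ} (hα' : α' ≠ 0)
    (h : (fun z => α * z + β) '' Para L = (fun z => α' * z + β') '' Para L) :
    (fun z => (α / α') * z + (β - β') / α') '' Para L = Para L := by
  have key := congrArg (fun S => (fun z => α'⁻¹ * (z - β')) '' S) h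
  simp only [Set.image_image] at key
  have e1 : (fun z => α'⁻¹ * (α * z + β - β')) '' Para L
      = (fun z => (α / α') * z + (β - β') / α') '' Para L := by
    apply Set.image_congr'
    intro z; field_simp; ring
  have e2 : (fun z => α'⁻¹ * (α' * z + β' - β')) '' Para L = Para L := by
    have : (fun z : ℂ => α'⁻¹ * (α' * z + β' - β')) = fun z => z := by
      funext z; field_simp; ring
    rw [this, Set.image_id']
  calc (fun z => (α / α') * z + (β - β') / α') '' Para L
      = (fun z => α'⁻¹ * (α * z + β - β')) '' Para L := e1.symm
    _ = (fun z => α'⁻¹ * (α' * z + β' - β')) '' Para L := by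
        convert key using 2 <;> funext z <;> ring
    _ = Para L := e2

lemma F_eq_cases {L : ℕ} (hL : 1 < L) {α β α' β' : ℂ} (hα : ‖α‖ = 1)
    (hα' : ‖α'‖ = 1) (h : F L α β = F L α' β') :
    (α = α' ∧ β = β') ∨ (α = -α' ∧ β = α' * ((L:ℂ) + uvec) + β') := by
  have hα'0 : α' ≠ 0 := by
    intro h0; rw [h0] at hα'; simp at hα'
  have h2 := affine_image_eq hα'0 h
  have habs2 : ‖α / α'‖ = 1 := by
    rw [norm_div, hα, hα']; norm_num
  rcases para_rigid hL habs2 h2 with ⟨h1, hb⟩ | ⟨h1, hb⟩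
  · left
    rw [div_eq_one_iff_eq hα'0] at h1
    rw [div_eq_zero_iff] at hb
    rcases hb with hb | hb
    · exact ⟨h1, by linear_combination hb⟩
    · exact absurd hb hα'0
  · right
    rw [div_eq_iff hα'0] at h1 hb
    exact ⟨by linear_combination h1, by linear_combination hb⟩







-- ### hexTile as F
lemma hexTile_F (L : ℕ) (m : Fin 3) (j : Fin L) (p q : ℤ) :
    hexTile L m j p q = F L (uvec ^ (2 * (m : ℕ) + 2))
      (uvec ^ (2 * (m : ℕ)) * (((j : ℕ) : ℂ) + 1) + (p : ℂ) * hexT1 L + (q : ℂ) * hexT2 L) := by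
  unfold hexTile F
  exact Set.image_congr' (fun z => by ring)

lemma mem_hexParquet {L : ℕ} {t : Set ℂ} :
    t ∈ HexParquet L ↔ ∃ m j p q, t = hexTile L m j p q := Iff.rfl

lemma abs_upow (k : ℕ) : ‖uvec ^ k‖ = 1 := by
  rw [norm_pow, habs, one_pow]

-- lattice identities
lemma u2T1 (L : ℕ) : uvec^2 * hexT1 L = hexT2 L - hexT1 L := by
  unfold hexT1 hexT2
  calc uvec^2 * ((L:ℂ) * (1 + uvec)) = (L:ℂ) * (uvec^2 + uvec^3) := by ring
    _ = (L:ℂ) * (uvec + uvec ^ 2) - (L:ℂ) * (1 + uvec) := by rw [hu3]; ring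

lemma u2T2 (L : ℕ) : uvec^2 * hexT2 L = -hexT1 L := by
  unfold hexT1 hexT2
  have h : (L:ℂ) * (uvec + uvec^2) * uvec^2 = (L:ℂ)*(uvec^3 + uvec^4) := by ring
  calc uvec^2 * ((L:ℂ) * (uvec + uvec^2)) = (L:ℂ)*(uvec^3 + uvec^4) := by ring
    _ = -((L:ℂ) * (1 + uvec)) := by rw [hu3, hu4]; ring

-- ### explicit symmetries
def tauI (L : ℕ) (p q : ℤ) : DirectIsom := ⟨1, (p:ℂ) * hexT1 L + (q:ℂ) * hexT2 L, by simp⟩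

def rotI : DirectIsom := ⟨uvec^2, 0, abs_upow 2⟩

def h0I (L : ℕ) : DirectIsom := ⟨-1, (L:ℂ) + (L:ℂ) * uvec^2, by simp⟩

def sigI (L : ℕ) (m : Fin 3) (p q : ℤ) : DirectIsom :=
  ⟨uvec ^ (2 * (m:ℕ)), (p:ℂ) * hexT1 L + (q:ℂ) * hexT2 L, abs_upow _⟩

lemma F_congr {L : ℕ} {α β α' β' : ℂ} (h1 : α = α') (h2 : β = β') :
    F L α β = F L α' β' := by rw [h1, h2]

lemma tau_image (L : ℕ) (p q : ℤ) (m : Fin 3) (j : Fin L) (p' q' : ℤ) :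
    (tauI L p q).image (hexTile L m j p' q') = hexTile L m j (p' + p) (q' + q) := by
  rw [hexTile_F, image_F, hexTile_F]
  apply F_congr
  · show 1 * uvec ^ (2 * (m:ℕ) + 2) = uvec ^ (2 * (m:ℕ) + 2)
    ring
  · show 1 * (uvec ^ (2 * (m:ℕ)) * (((j:ℕ):ℂ)+1) + (p':ℂ) * hexT1 L + (q':ℂ) * hexT2 L)
        + ((p:ℂ) * hexT1 L + (q:ℂ) * hexT2 L)
      = uvec ^ (2 * (m:ℕ)) * (((j:ℕ):ℂ)+1) + ((p' + p : ℤ):ℂ) * hexT1 L + ((q' + q : ℤ):ℂ) * hexT2 L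
    push_cast
    ring

lemma rot_image (L : ℕ) (m : Fin 3) (j : Fin L) (p q : ℤ) :
    rotI.image (hexTile L m j p q) = hexTile L (m + 1) j (-p - q) p := by
  rw [hexTile_F, image_F, hexTile_F]
  have t1 := u2T1 L
  have t2 := u2T2 L
  have h46 : uvec^2 * uvec^4 = 1 := by
    have h : uvec^2 * uvec^4 = uvec^6 := by ring
    rw [h, hu6]
  fin_cases m
  · apply F_congr
    · show uvec^2 * uvec^(2*0+2) = uvec^(2*1+2)
      ring
    · show uvec^2 * (uvec^(2*0) * (((j:ℕ):ℂ)+1) + (p:ℂ) * hexT1 L + (q:ℂ) * hexT2 L) + 0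
        = uvec^(2*1) * (((j:ℕ):ℂ)+1) + ((-p-q : ℤ):ℂ) * hexT1 L + ((p:ℤ):ℂ) * hexT2 L
      push_cast
      linear_combination (p:ℂ) * t1 + (q:ℂ) * t2
  · apply F_congr
    · show uvec^2 * uvec^(2*1+2) = uvec^(2*2+2)
      ring
    · show uvec^2 * (uvec^(2*1) * (((j:ℕ):ℂ)+1) + (p:ℂ) * hexT1 L + (q:ℂ) * hexT2 L) + 0
        = uvec^(2*2) * (((j:ℕ):ℂ)+1) + ((-p-q : ℤ):ℂ) * hexT1 L + ((p:ℤ):ℂ) * hexT2 L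
      push_cast
      linear_combination (p:ℂ) * t1 + (q:ℂ) * t2
  · apply F_congr
    · show uvec^2 * uvec^(2*2+2) = uvec^(2*0+2)
      calc uvec^2 * uvec^(2*2+2) = uvec^2 * uvec^6 := by norm_num
        _ = uvec^2 := by rw [hu6, mul_one]
        _ = uvec^(2*0+2) := by norm_num
    · show uvec^2 * (uvec^(2*2) * (((j:ℕ):ℂ)+1) + (p:ℂ) * hexT1 L + (q:ℂ) * hexT2 L) + 0
        = uvec^(2*0) * (((j:ℕ):ℂ)+1) + ((-p-q : ℤ):ℂ) * hexT1 L + ((p:ℤ):ℂ) * hexT2 L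
      push_cast
      linear_combination (((j:ℕ):ℂ)+1) * h46 + (p:ℂ) * t1 + (q:ℂ) * t2

def jflip (L : ℕ) (j : Fin L) : Fin L := ⟨L - 1 - (j:ℕ), by have := j.isLt; omega⟩

lemma jflip_cast (L : ℕ) (j : Fin L) :
    (((jflip L j : Fin L) : ℕ) : ℂ) = (L:ℂ) - 1 - ((j:ℕ):ℂ) := by
  have hj := j.isLt
  have h1 : (j:ℕ) ≤ L - 1 := by omega
  have h2 : 1 ≤ L := by omega
  show ((L - 1 - (j:ℕ) : ℕ) : ℂ) = (L:ℂ) - 1 - ((j:ℕ):ℂ)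
  rw [Nat.cast_sub h1, Nat.cast_sub h2]
  push_cast
  ring

lemma h0_image0 (L : ℕ) (j : Fin L) (p q : ℤ) :
    (h0I L).image (hexTile L 0 j p q) = hexTile L 0 (jflip L j) (-p) (-q) := by
  rw [hexTile_F, image_F, hexTile_F, F_halfturn]
  apply F_congr
  · simp only [h0I]; ring
  · simp only [h0I, jflip_cast]
    have e0 : ((0:Fin 3):ℕ) = 0 := rfl
    rw [e0]
    unfold hexT1 hexT2
    push_cast
    linear_combination (-(1:ℂ) - uvec) * hu2

lemma h0_image1 (L : ℕ) (j : Fin L) (p q : ℤ) :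
    (h0I L).image (hexTile L 1 j p q) = hexTile L 1 (jflip L j) (1 - p) (-q) := by
  rw [hexTile_F, image_F, hexTile_F, F_halfturn]
  apply F_congr
  · simp only [h0I]; ring
  · simp only [h0I, jflip_cast]
    have e1 : ((1:Fin 3):ℕ) = 1 := rfl
    rw [e1]
    unfold hexT1 hexT2
    push_cast
    linear_combination (-(uvec^2 + (L:ℂ)*uvec) * (1 + uvec)) * hu2

lemma h0_image2 (L : ℕ) (j : Fin L) (p q : ℤ) :
    (h0I L).image (hexTile L 2 j p q) = hexTile L 2 (jflip L j) (-p) (1 - q) := by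
  rw [hexTile_F, image_F, hexTile_F, F_halfturn]
  apply F_congr
  · simp only [h0I]; ring
  · simp only [h0I, jflip_cast]
    have e2 : ((2:Fin 3):ℕ) = 2 := rfl
    rw [e2]
    unfold hexT1 hexT2
    push_cast
    linear_combination ((1 + uvec) * ((L:ℂ) - uvec^4 - (L:ℂ)*uvec - (L:ℂ)*uvec^3)) * hu2

lemma hexTile_mem (L : ℕ) (m : Fin 3) (j : Fin L) (p q : ℤ) :
    hexTile L m j p q ∈ HexParquet L := ⟨m, j, p, q, rfl⟩

lemma sym_tau (L : ℕ) (p q : ℤ) : IsSymmetry (HexParquet L) (tauI L p q) := by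
  unfold IsSymmetry
  ext t
  constructor
  · rintro ⟨s, ⟨m, j, p', q', rfl⟩, rfl⟩
    show (tauI L p q).image (hexTile L m j p' q') ∈ HexParquet L
    rw [tau_image]
    exact hexTile_mem L m j _ _
  · rintro ⟨m, j, p', q', rfl⟩
    refine ⟨hexTile L m j (p' - p) (q' - q), hexTile_mem L m j _ _, ?_⟩
    show (tauI L p q).image (hexTile L m j (p' - p) (q' - q)) = hexTile L m j p' q'
    rw [tau_image]
    congr 1 <;> ring

lemma sym_rot (L : ℕ) : IsSymmetry (HexParquet L) rotI := by
  unfold IsSymmetry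
  ext t
  constructor
  · rintro ⟨s, ⟨m, j, p', q', rfl⟩, rfl⟩
    show rotI.image (hexTile L m j p' q') ∈ HexParquet L
    rw [rot_image]
    exact hexTile_mem L _ j _ _
  · rintro ⟨m, j, p', q', rfl⟩
    refine ⟨hexTile L (m + 2) j q' (-p' - q') , hexTile_mem L _ j _ _, ?_⟩
    show rotI.image (hexTile L (m + 2) j q' (-p' - q')) = hexTile L m j p' q'
    rw [rot_image]
    have h1 : m + 2 + 1 = m := by fin_cases m <;> decide
    have h2 : -q' - (-p' - q') = p' := by ring
    rw [h1, h2]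

lemma sym_h0 (L : ℕ) : IsSymmetry (HexParquet L) (h0I L) := by
  unfold IsSymmetry
  ext t
  constructor
  · rintro ⟨s, ⟨m, j, p', q', rfl⟩, rfl⟩
    fin_cases m
    · show (h0I L).image (hexTile L 0 j p' q') ∈ HexParquet L
      rw [h0_image0]; exact hexTile_mem L _ _ _ _
    · show (h0I L).image (hexTile L 1 j p' q') ∈ HexParquet L
      rw [h0_image1]; exact hexTile_mem L _ _ _ _
    · show (h0I L).image (hexTile L 2 j p' q') ∈ HexParquet L
      rw [h0_image2]; exact hexTile_mem L _ _ _ _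
  · rintro ⟨m, j, p', q', rfl⟩
    have hflip : jflip L (jflip L j) = j := by
      have := j.isLt
      apply Fin.ext
      simp only [jflip]
      omega
    fin_cases m
    · refine ⟨hexTile L 0 (jflip L j) (-p') (-q'), hexTile_mem L _ _ _ _, ?_⟩
      show (h0I L).image (hexTile L 0 (jflip L j) (-p') (-q')) = hexTile L 0 j p' q'
      rw [h0_image0, hflip]
      congr 1 <;> ring
    · refine ⟨hexTile L 1 (jflip L j) (1 - p') (-q'), hexTile_mem L _ _ _ _, ?_⟩
      show (h0I L).image (hexTile L 1 (jflip L j) (1 - p') (-q')) = hexTile L 1 j p' q'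
      rw [h0_image1, hflip]
      congr 1 <;> ring
    · refine ⟨hexTile L 2 (jflip L j) (-p') (1 - q'), hexTile_mem L _ _ _ _, ?_⟩
      show (h0I L).image (hexTile L 2 (jflip L j) (-p') (1 - q')) = hexTile L 2 j p' q'
      rw [h0_image2, hflip]
      congr 1 <;> ring

lemma sym_sig (L : ℕ) (m : Fin 3) (p q : ℤ) : IsSymmetry (HexParquet L) (sigI L m p q) := by
  fin_cases m
  · apply sym_congr (g' := tauI L p q) _ _ (sym_tau L p q) <;> simp [sigI, tauI]
  · apply sym_congr (g' := (tauI L p q).comp rotI) _ _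
      (sym_comp (sym_tau L p q) (sym_rot L)) <;>
      simp [sigI, tauI, rotI, DirectIsom.comp]
  · apply sym_congr (g' := (tauI L p q).comp (rotI.comp rotI)) _ _
      (sym_comp (sym_tau L p q) (sym_comp (sym_rot L) (sym_rot L))) <;>
      simp [sigI, tauI, rotI, DirectIsom.comp] <;> ring

lemma sig_image (L : ℕ) (m : Fin 3) (p q : ℤ) (j : Fin L) :
    (sigI L m p q).image (hexTile L 0 j 0 0) = hexTile L m j p q := by
  rw [hexTile_F, image_F, hexTile_F]
  have e0 : ((0:Fin 3):ℕ) = 0 := rfl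
  apply F_congr
  · show uvec ^ (2*(m:ℕ)) * uvec ^ (2*((0:Fin 3):ℕ)+2) = uvec ^ (2*(m:ℕ)+2)
    rw [e0]
    ring
  · show uvec ^ (2*(m:ℕ)) * (uvec^(2*((0:Fin 3):ℕ)) * (((j:ℕ):ℂ)+1) + ((0:ℤ):ℂ) * hexT1 L + ((0:ℤ):ℂ) * hexT2 L)
        + ((p:ℂ) * hexT1 L + (q:ℂ) * hexT2 L)
      = uvec ^ (2*(m:ℕ)) * (((j:ℕ):ℂ)+1) + (p:ℂ) * hexT1 L + (q:ℂ) * hexT2 L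
    rw [e0]
    push_cast
    ring

lemma u_im_ne : uvec.im ≠ 0 := by
  rw [u_im]
  positivity

lemma u2_ne_one : uvec^2 ≠ 1 := by
  intro h
  rw [hu2] at h
  have him := congrArg Complex.im h
  simp only [Complex.sub_im, Complex.one_im, u_im] at him
  have := sqrt3_pos
  norm_num at him
  all_goals linarith

lemma u4_ne_one : uvec^4 ≠ 1 := by
  intro h
  rw [hu4] at h
  have him := congrArg Complex.im h
  simp only [Complex.neg_im, Complex.one_im, u_im] at him
  have := sqrt3_pos
  linarith

lemma u2_ne_negone : uvec^2 ≠ -1 := by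
  intro h
  rw [hu2] at h
  have him := congrArg Complex.im h
  simp only [Complex.sub_im, Complex.neg_im, Complex.one_im, u_im] at him
  have := sqrt3_pos
  norm_num at him
  all_goals linarith

lemma u4_ne_negone : uvec^4 ≠ -1 := by
  intro h
  rw [hu4] at h
  have him := congrArg Complex.im h
  simp only [Complex.neg_im, Complex.one_im, u_im] at him
  have := sqrt3_pos
  norm_num at him
  all_goals linarith

/-- A symmetry of the hexagonal parquet which is a translation by a real
number of absolute value less than `L` is the identity. -/
lemma trans_zero (L : ℕ) (hL : 1 < L) (g : DirectIsom)
    (hg : IsSymmetry (HexParquet L) g) (d : ℝ) (hA : g.a = 1) (hB : g.b = (d:ℂ))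
    (hd : |d| < L) : d = 0 := by
  have hL0 : 0 < L := by omega
  set j0 : Fin L := ⟨0, hL0⟩ with hj0def
  have hmem := mem_of_sym hg (hexTile_mem L 2 j0 0 0)
  obtain ⟨mt, jt, pt, qt, heq⟩ := hmem
  obtain ⟨n, hn⟩ := mt
  rw [hexTile_F, image_F, hexTile_F, hA, hB] at heq
  simp only [Fin.val_mk] at heq
  have habs1 : ‖(1:ℂ) * uvec^(2*((2:Fin 3):ℕ)+2)‖ = 1 := by
    rw [one_mul]; exact abs_upow _
  rcases F_eq_cases hL habs1 (abs_upow _) heq with ⟨c1, c2⟩ | ⟨c1, c2⟩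
  · -- rotation part matches directly; must have n = 2
    rw [one_mul] at c1 c2
    have e2 : ((2:Fin 3):ℕ) = 2 := rfl
    rw [e2] at c1 c2
    interval_cases n
    · exfalso
      norm_num at c1
      have h6 : uvec^2 = 1 := by rw [← c1]; exact hu6
      exact u2_ne_one h6
    · exfalso
      norm_num at c1
      have h4 : uvec^4 = 1 := by rw [← c1]; exact hu6
      exact u4_ne_one h4
    · -- the real case
      norm_num at c2
      unfold hexT1 hexT2 at c2
      push_cast at c2
      have key : ((d - ((L:ℝ) * pt - (L:ℝ) * qt) : ℝ) : ℂ)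
          + ((((jt:ℕ):ℝ) - ((L:ℝ) * pt + 2 * (L:ℝ) * qt) : ℝ) : ℂ) * uvec = 0 := by
        push_cast
        linear_combination c2 + ((((jt:ℕ):ℂ)) * uvec * (1+uvec) + (qt:ℂ) * (L:ℂ)) * hu2
      obtain ⟨hre, him⟩ := u_indep _ _ key
      have hZ : ((jt:ℕ):ℤ) = (L:ℤ) * pt + 2 * (L:ℤ) * qt := by
        have h : ((jt:ℕ):ℝ) = (L:ℝ) * pt + 2 * (L:ℝ) * qt := by linarith
        exact_mod_cast h
      have hjtlt : ((jt:ℕ):ℤ) < L := by exact_mod_cast jt.isLt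
      have hjt0 : (0:ℤ) ≤ ((jt:ℕ):ℤ) := by positivity
      have hLposZ : (0:ℤ) < L := by exact_mod_cast hL0
      have hk : ((jt:ℕ):ℤ) = (L:ℤ) * (pt + 2 * qt) := by rw [hZ]; ring
      have hk0 : pt + 2 * qt = 0 := by
        rcases lt_trichotomy (pt + 2 * qt) 0 with h | h | h
        · exfalso
          have h1 : (L:ℤ) * (pt + 2*qt) ≤ (L:ℤ) * (-1) := by
            apply mul_le_mul_of_nonneg_left (by omega) (by omega)
          omega
        · exact h
        · exfalso
          have h1 : (L:ℤ) * 1 ≤ (L:ℤ) * (pt + 2*qt) := by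
            apply mul_le_mul_of_nonneg_left (by omega) (by omega)
          omega
      have hpt : (pt:ℝ) = -2 * qt := by exact_mod_cast (by omega : pt = -2 * qt)
      have hd3 : d = -3 * ((L:ℝ) * qt) := by
        have h2 : (L:ℝ) * pt = -2 * ((L:ℝ) * qt) := by rw [hpt]; ring
        linarith
      have hq0 : qt = 0 := by
        by_contra hq
        have h1 : (1:ℝ) ≤ |(qt:ℝ)| := by
          have : (1:ℤ) ≤ |qt| := Int.one_le_abs hq
          exact_mod_cast this
        have hLR : (1:ℝ) < L := by exact_mod_cast hL
        rw [abs_lt] at hd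
        rcases le_abs.mp h1 with h2 | h2
        · nlinarith
        · nlinarith
      rw [hd3, hq0]
      norm_num
  · -- orientation-reversing match: impossible
    exfalso
    rw [one_mul] at c1
    rw [show ((2:Fin 3):ℕ) = 2 from rfl] at c1
    interval_cases n
    · norm_num at c1
      rw [hu6] at c1
      exact u2_ne_negone (by linear_combination c1)
    · norm_num at c1
      rw [hu6] at c1
      exact u4_ne_negone (by linear_combination c1)
    · norm_num at c1
      rw [hu6] at c1
      norm_num at c1

/-- Core invariance: any symmetry of the parquet preserves the board index
up to the flip `j ↦ L-1-j`. -/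
lemma main_minj (L : ℕ) (hL : 1 < L) (g : DirectIsom)
    (hg : IsSymmetry (HexParquet L) g) (m m' : Fin 3) (j j' : Fin L)
    (p q p' q' : ℤ)
    (h : g.image (hexTile L m j p q) = hexTile L m' j' p' q') :
    (j:ℕ) = (j':ℕ) ∨ (j:ℕ) + (j':ℕ) = L - 1 := by
  set G : DirectIsom := ((sigI L m' p' q').inv).comp (g.comp (sigI L m p q)) with hGdef
  have hG : IsSymmetry (HexParquet L) G :=
    sym_comp (sym_inv (sym_sig L m' p' q')) (sym_comp hg (sym_sig L m p q))
  have him : G.image (hexTile L 0 j 0 0) = hexTile L 0 j' 0 0 := by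
    rw [hGdef, DirectIsom.image_comp, DirectIsom.image_comp, sig_image, h]
    exact inv_image_of_image_eq _ (sig_image L m' p' q' j')
  rw [hexTile_F, image_F, hexTile_F] at him
  have e0 : ((0:Fin 3):ℕ) = 0 := rfl
  rw [e0] at him
  have habs1 : ‖G.a * uvec^(2*0+2)‖ = 1 := by
    rw [norm_mul, G.ha, abs_upow, one_mul]
  rcases F_eq_cases hL habs1 (abs_upow _) him with ⟨c1, c2⟩ | ⟨c1, c2⟩
  · -- G is a translation
    have hX : uvec^(2*0+2) ≠ 0 := pow_ne_zero _ u_ne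
    have hGa : G.a = 1 := mul_right_cancel₀ hX (c1.trans (one_mul _).symm)
    rw [hGa] at c2
    norm_num at c2
    set D : ℝ := ((j':ℕ):ℝ) - ((j:ℕ):ℝ) with hDdef
    have hB : G.b = (D:ℂ) := by
      simp only [hDdef]
      push_cast
      linear_combination c2
    have hDlt : |D| < L := by
      rw [abs_lt]
      have h1 : ((j:ℕ):ℝ) < L := by exact_mod_cast j.isLt
      have h2 : ((j':ℕ):ℝ) < L := by exact_mod_cast j'.isLt
      have h3 : (0:ℝ) ≤ ((j:ℕ):ℝ) := by positivity
      have h4 : (0:ℝ) ≤ ((j':ℕ):ℝ) := by positivity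
      constructor <;> simp only [hDdef] <;> linarith
    have hD0 := trans_zero L hL G hG D hGa hB hDlt
    left
    have : ((j:ℕ):ℝ) = ((j':ℕ):ℝ) := by simp only [hDdef] at hD0; linarith
    exact_mod_cast this
  · -- G is a point reflection; compose with the half-turn
    have hX : uvec^(2*0+2) ≠ 0 := pow_ne_zero _ u_ne
    have hGa : G.a = -1 := by
      have : G.a * uvec^(2*0+2) = (-1) * uvec^(2*0+2) := by rw [c1]; ring
      exact mul_right_cancel₀ hX this
    rw [hGa] at c2
    norm_num at c2
    set G2 : DirectIsom := (h0I L).comp G with hG2def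
    have hG2 : IsSymmetry (HexParquet L) G2 := sym_comp (sym_h0 L) hG
    have hA2 : G2.a = 1 := by
      rw [hG2def]
      show (-1) * G.a = 1
      rw [hGa]; ring
    set D : ℝ := (L:ℝ) - 1 - ((j:ℕ):ℝ) - ((j':ℕ):ℝ) with hDdef
    have hB2 : G2.b = (D:ℂ) := by
      rw [hG2def]
      show (-1) * G.b + ((L:ℂ) + (L:ℂ) * uvec^2) = (D:ℂ)
      simp only [hDdef]
      push_cast
      linear_combination -c2 - hu3
    have hDlt : |D| < L := by
      rw [abs_lt]
      have h1 : ((j:ℕ):ℝ) < L := by exact_mod_cast j.isLt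
      have h2 : ((j':ℕ):ℝ) < L := by exact_mod_cast j'.isLt
      have h3 : (0:ℝ) ≤ ((j:ℕ):ℝ) := by positivity
      have h4 : (0:ℝ) ≤ ((j':ℕ):ℝ) := by positivity
      have hL1 : (1:ℝ) < L := by exact_mod_cast hL
      have h1n : (j:ℕ) + 1 ≤ L := j.isLt
      have h2n : (j':ℕ) + 1 ≤ L := j'.isLt
      have h1' : ((j:ℕ):ℝ) + 1 ≤ (L:ℝ) := by exact_mod_cast h1n
      have h2' : ((j':ℕ):ℝ) + 1 ≤ (L:ℝ) := by exact_mod_cast h2n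
      constructor <;> simp only [hDdef] <;> linarith
    have hD0 := trans_zero L hL G2 hG2 D hA2 hB2 hDlt
    right
    have hr : ((j:ℕ):ℝ) + ((j':ℕ):ℝ) + 1 = (L:ℝ) := by simp only [hDdef] at hD0; linarith
    have hn : (j:ℕ) + (j':ℕ) + 1 = L := by exact_mod_cast hr
    omega

lemma equiv_tiles (L : ℕ) (hL : 1 < L) (m m' : Fin 3) (j j' : Fin L)
    (p q p' q' : ℤ)
    (hj : ((j':ℕ) = (j:ℕ)) ∨ ((j:ℕ) + (j':ℕ) = L - 1)) :
    TileEquiv (HexParquet L) (hexTile L m j p q) (hexTile L m' j' p' q') := by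
  rcases hj with hj | hj
  · refine ⟨(sigI L m' p' q').comp (sigI L m p q).inv,
      sym_comp (sym_sig L m' p' q') (sym_inv (sym_sig L m p q)), ?_⟩
    rw [DirectIsom.image_comp,
      inv_image_of_image_eq _ (sig_image L m p q j)]
    have hjj : j = j' := Fin.ext hj.symm
    rw [hjj, sig_image]
  · refine ⟨(sigI L m' p' q').comp ((h0I L).comp (sigI L m p q).inv),
      sym_comp (sym_sig L m' p' q')
        (sym_comp (sym_h0 L) (sym_inv (sym_sig L m p q))), ?_⟩
    rw [DirectIsom.image_comp, DirectIsom.image_comp,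
      inv_image_of_image_eq _ (sig_image L m p q j), h0_image0]
    have hflip : jflip L j = j' := by
      apply Fin.ext
      have h1 := j.isLt
      have h2 := j'.isLt
      simp only [jflip]
      omega
    rw [hflip]
    have e1 : (-0 : ℤ) = 0 := by norm_num
    rw [e1, sig_image]


/-- In the honeycomb tiling by regular hexagons of side `L`
(`L > 1`), each hexagon subdivided into three L×L rhombi meeting at its center
and each rhombus into `L` parallel 1×L parallelograms (this is exactly the
tiling `HexParquet L`), the symmetry group of the resulting tiling acts on the
parallelogram tiles with exactly `⌊(L+1)/2⌋` orbits. -/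
theorem hexParquet_orbit_count (L : ℕ) (hL : 1 < L) :
    IsohedralNumberIs (HexParquet L) ((L + 1) / 2) := by
  classical
  have hK : ∀ jv : ℕ, jv < L → min jv (L - 1 - jv) < (L + 1) / 2 := by
    intro jv hjv; omega
  have hex : ∀ t : {t // t ∈ HexParquet L},
      ∃ m : Fin 3, ∃ jj : Fin L, ∃ p q : ℤ, t.1 = hexTile L m jj p q := fun t => t.2
  choose Fm Fj Fp Fq Fspec using hex
  refine ⟨fun t => ⟨min ((Fj t : ℕ)) (L - 1 - (Fj t : ℕ)), hK _ (Fj t).isLt⟩, ?_, ?_⟩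
  · -- surjectivity
    intro i
    have hiL : (i : ℕ) < L := by have := i.isLt; omega
    have ht0 : hexTile L 0 ⟨(i:ℕ), hiL⟩ 0 0 ∈ HexParquet L := hexTile_mem L _ _ _ _
    refine ⟨⟨hexTile L 0 ⟨(i:ℕ), hiL⟩ 0 0, ht0⟩, ?_⟩
    set t0 : {t // t ∈ HexParquet L} := ⟨hexTile L 0 ⟨(i:ℕ), hiL⟩ 0 0, ht0⟩ with ht0def
    have hid : idIsom.image (hexTile L (Fm t0) (Fj t0) (Fp t0) (Fq t0))
        = hexTile L 0 ⟨(i:ℕ), hiL⟩ 0 0 := by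
      rw [idIsom_image, ← Fspec t0]
    have hminj := main_minj L hL idIsom (sym_id _) _ _ _ _ _ _ _ _ hid
    apply Fin.ext
    show min ((Fj t0 : ℕ)) (L - 1 - (Fj t0 : ℕ)) = (i : ℕ)
    have h1 := (Fj t0).isLt
    have h2 := i.isLt
    have h3 : ((⟨(i:ℕ), hiL⟩ : Fin L) : ℕ) = (i : ℕ) := rfl
    rw [h3] at hminj
    omega
  · intro t t'
    constructor
    · intro hf
      have hmin : min ((Fj t : ℕ)) (L - 1 - (Fj t : ℕ))
          = min ((Fj t' : ℕ)) (L - 1 - (Fj t' : ℕ)) := congrArg Fin.val hf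
      have h1 := (Fj t).isLt
      have h2 := (Fj t').isLt
      have hj : ((Fj t' : ℕ) = (Fj t : ℕ)) ∨ ((Fj t : ℕ) + (Fj t' : ℕ) = L - 1) := by
        omega
      rw [Fspec t, Fspec t']
      exact equiv_tiles L hL _ _ _ _ _ _ _ _ hj
    · rintro ⟨g, hg, himg⟩
      rw [Fspec t, Fspec t'] at himg
      have hminj := main_minj L hL g hg _ _ _ _ _ _ _ _ himg
      apply Fin.ext
      show min ((Fj t : ℕ)) (L - 1 - (Fj t : ℕ))
          = min ((Fj t' : ℕ)) (L - 1 - (Fj t' : ℕ))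
      have h1 := (Fj t).isLt
      have h2 := (Fj t').isLt
      omega
end
end

section
/- For the modified 1×L parallelogram tile whose short edges carry a bump shape R and whose matching requires R to meet its complement R', if R appears n₁ times and R' appears n₂ times on the tile's boundary with n₁ > n₂, then in any finite simply connected patch of tiles all of whose interior edges are matched, at least n₁ − n₂ instances of R per tile lie on the boundary of the patch; hence the patch cannot be extended to a tiling of the whole plane. -/
open Complex Set

noncomputable section

namespace DirectIsom

lemma a_ne_zero (g : DirectIsom) : g.a ≠ 0 := by
  intro h
  have := g.ha
  rw [h] at this
  simp at this

lemma apply_dist (g : DirectIsom) (z w : ℂ) : dist (g.apply z) (g.apply w) = dist z w := by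
  simp only [apply, Complex.dist_eq]
  have h : g.a * z + g.b - (g.a * w + g.b) = g.a * (z - w) := by ring
  rw [h, norm_mul, g.ha, one_mul]

def isomEquiv (g : DirectIsom) : ℂ ≃ᵢ ℂ where
  toFun := g.apply
  invFun := fun w => (w - g.b) / g.a
  left_inv := fun z => by
    simp only [apply]
    field_simp
    rw [add_sub_cancel_right]
    exact mul_div_cancel_left₀ z g.a_ne_zero
  right_inv := fun w => by
    simp only [apply]
    field_simp
    rw [mul_div_cancel_left₀ _ g.a_ne_zero]
    ring
  isometry_toFun := Isometry.of_dist_eq g.apply_dist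

lemma coe_isomEquiv (g : DirectIsom) : ⇑g.isomEquiv = g.apply := rfl

lemma apply_injective (g : DirectIsom) : Function.Injective g.apply := g.isomEquiv.injective

lemma image_interior (g : DirectIsom) (S : Set ℂ) :
    g.apply '' interior S = interior (g.image S) := by
  have := g.isomEquiv.toHomeomorph.image_interior S
  simpa [image, coe_isomEquiv] using this

lemma image_ball (g : DirectIsom) (x : ℂ) (r : ℝ) :
    g.apply '' Metric.ball x r = Metric.ball (g.apply x) r := by
  have := g.isomEquiv.image_ball x r
  simpa [coe_isomEquiv] using this

lemma image_subset_closedBall (g : DirectIsom) {S : Set ℂ} {x : ℂ} {D : ℝ}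
    (h : S ⊆ Metric.closedBall x D) :
    g.image S ⊆ Metric.closedBall (g.apply x) D := by
  rintro _ ⟨z, hz, rfl⟩
  simpa [Metric.mem_closedBall, g.apply_dist] using h hz

lemma image_mono (g : DirectIsom) {S S' : Set ℂ} (h : S ⊆ S') : g.image S ⊆ g.image S' :=
  Set.image_mono h

end DirectIsom

section Counting

open Classical in
/-- The finset of pairs (tile, marked point of that tile). -/
def pairsOf (F : Finset DirectIsom) (Rfin : Finset ℂ) : Finset (DirectIsom × ℂ) :=
  F.biUnion fun g => (Rfin.image g.apply).image fun p => (g, p)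

lemma mem_pairsOf {F : Finset DirectIsom} {Rfin : Finset ℂ} {pr : DirectIsom × ℂ} :
    pr ∈ pairsOf F Rfin ↔ pr.1 ∈ F ∧ pr.2 ∈ pr.1.image (↑Rfin : Set ℂ) := by
  obtain ⟨g, p⟩ := pr
  simp only [pairsOf, Finset.mem_biUnion, Finset.mem_image, DirectIsom.image,
    Set.mem_image, Finset.mem_coe, Prod.mk.injEq]
  constructor
  · rintro ⟨h, hh, q, ⟨z, hz, rfl⟩, rfl, rfl⟩
    exact ⟨hh, z, hz, rfl⟩
  · rintro ⟨hg, z, hz, rfl⟩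
    exact ⟨g, hg, g.apply z, ⟨z, hz, rfl⟩, rfl, rfl⟩

open Classical in
lemma card_pairsOf (F : Finset DirectIsom) (Rfin : Finset ℂ) :
    (pairsOf F Rfin).card = F.card * Rfin.card := by
  rw [pairsOf, Finset.card_biUnion]
  · have h : ∀ g ∈ F, ((Rfin.image g.apply).image fun p => (g, p)).card = Rfin.card := by
      intro g _
      rw [Finset.card_image_of_injective _ (fun p q h => by simpa using h),
        Finset.card_image_of_injective _ g.apply_injective]
    rw [Finset.sum_congr rfl h, Finset.sum_const, smul_eq_mul]
  · intro g hg g' hg' hne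
    simp only [Finset.disjoint_left, Finset.mem_image]
    rintro _ ⟨p, hp, rfl⟩ ⟨q, hq, h⟩
    exact hne (congrArg Prod.fst h).symm

open Classical in
lemma card_matched_le (Rfin R'fin : Finset ℂ) (F W : Finset DirectIsom)
    (A : Finset (DirectIsom × ℂ)) (hA : A ⊆ pairsOf F Rfin)
    (hdisj : (↑F : Set DirectIsom).Pairwise fun g g' =>
      Disjoint (g.image (↑Rfin : Set ℂ)) (g'.image (↑Rfin : Set ℂ)))
    (hmatch : ∀ pr ∈ A, ∃ g' ∈ W, pr.2 ∈ g'.image (↑R'fin : Set ℂ)) :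
    A.card ≤ W.card * R'fin.card := by
  classical
  set f : DirectIsom × ℂ → DirectIsom × ℂ := fun pr =>
    (if h : ∃ g' ∈ W, pr.2 ∈ g'.image (↑R'fin : Set ℂ) then h.choose else pr.1, pr.2) with hf
  have hmap : ∀ pr ∈ A, f pr ∈ pairsOf W R'fin := by
    intro pr hpr
    have h := hmatch pr hpr
    rw [mem_pairsOf]
    simp only [hf, dif_pos h]
    exact ⟨h.choose_spec.1, h.choose_spec.2⟩
  have hinj : (↑A : Set (DirectIsom × ℂ)).InjOn f := by
    intro pr hpr pr' hpr' heq
    have h2 : pr.2 = pr'.2 := by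
      have := congrArg Prod.snd heq
      simpa [hf] using this
    have h1 : pr.1 = pr'.1 := by
      by_contra hne
      have hm := mem_pairsOf.mp (hA hpr)
      have hm' := mem_pairsOf.mp (hA hpr')
      have hd := hdisj hm.1 hm'.1 hne
      exact (Set.disjoint_left.mp hd hm.2) (h2 ▸ hm'.2)
    exact Prod.ext h1 h2
  calc A.card ≤ (pairsOf W R'fin).card := Finset.card_le_card_of_injOn f hmap hinj
    _ = W.card * R'fin.card := card_pairsOf W R'fin

open Classical in
lemma patch_surplus (Rpts R'pts : Set ℂ) (hRfin : Rpts.Finite) (hR'fin : R'pts.Finite)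
    (n₁ n₂ : ℕ) (hn₁ : Rpts.ncard = n₁) (hn₂ : R'pts.ncard = n₂)
    (F : Finset DirectIsom)
    (hdisjR : (↑F : Set DirectIsom).Pairwise fun g g' =>
      Disjoint (g.image Rpts) (g'.image Rpts)) :
    (n₁ - n₂) * F.card ≤
      {pr : DirectIsom × ℂ | pr.1 ∈ F ∧ pr.2 ∈ pr.1.image Rpts ∧
        ¬ ∃ g' ∈ F, g' ≠ pr.1 ∧ pr.2 ∈ g'.image R'pts}.ncard := by
  classical
  set Rfin := hRfin.toFinset with hRfdef
  set R'fin := hR'fin.toFinset with hR'fdef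
  have hRc : (↑Rfin : Set ℂ) = Rpts := hRfin.coe_toFinset
  have hR'c : (↑R'fin : Set ℂ) = R'pts := hR'fin.coe_toFinset
  have hRcard : Rfin.card = n₁ := by rw [← hn₁, Set.ncard_eq_toFinset_card _ hRfin]
  have hR'card : R'fin.card = n₂ := by rw [← hn₂, Set.ncard_eq_toFinset_card _ hR'fin]
  set P := pairsOf F Rfin with hP
  set m : DirectIsom × ℂ → Prop := fun pr => ∃ g' ∈ F, g' ≠ pr.1 ∧ pr.2 ∈ g'.image R'pts
    with hmdef
  set Pm := P.filter m with hPm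
  set Pu := P.filter (fun pr => ¬ m pr) with hPu
  have hsplit : Pm.card + Pu.card = P.card :=
    Finset.card_filter_add_card_filter_not (p := m)
  have htot : P.card = F.card * n₁ := by rw [hP, card_pairsOf, hRcard]
  have hmle : Pm.card ≤ F.card * n₂ := by
    rw [← hR'card]
    refine card_matched_le Rfin R'fin F F Pm (Finset.filter_subset _ _) ?_ ?_
    · rw [hRc]; exact hdisjR
    · intro pr hpr
      obtain ⟨g', hg', _, hmem⟩ := (Finset.mem_filter.mp hpr).2
      exact ⟨g', hg', hR'c ▸ hmem⟩
  have hsetEq : {pr : DirectIsom × ℂ | pr.1 ∈ F ∧ pr.2 ∈ pr.1.image Rpts ∧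
      ¬ ∃ g' ∈ F, g' ≠ pr.1 ∧ pr.2 ∈ g'.image R'pts} = (↑Pu : Set (DirectIsom × ℂ)) := by
    ext pr
    simp only [Set.mem_setOf_eq, Finset.coe_filter, hPu, Set.mem_setOf_eq,
      Finset.mem_coe, hP, mem_pairsOf, hRc, hmdef]
    tauto
  rw [hsetEq, Set.ncard_coe_finset]
  have hmul : (n₁ - n₂) * F.card = n₁ * F.card - n₂ * F.card := Nat.sub_mul _ _ _
  rw [hmul, mul_comm n₁ F.card] at *
  rw [mul_comm n₂ F.card]
  omega

end Counting

section Packing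

open MeasureTheory Metric ENNReal

lemma pi_pos' : (0 : ℝ≥0∞) < NNReal.pi := by
  simp only [ENNReal.coe_pos]
  exact_mod_cast Real.pi_pos

lemma cancel_pi {a b : ℝ} (hb : 0 ≤ b)
    (h : ENNReal.ofReal a * NNReal.pi ≤ ENNReal.ofReal b * NNReal.pi) : a ≤ b := by
  have h2 : ENNReal.ofReal a ≤ ENNReal.ofReal b :=
    (ENNReal.mul_le_mul_iff_left pi_pos'.ne' ENNReal.coe_ne_top).mp h
  exact (ENNReal.ofReal_le_ofReal_iff hb).mp h2

lemma vol_ball' (x : ℂ) {r : ℝ} (hr : 0 ≤ r) :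
    volume (Metric.ball x r) = ENNReal.ofReal (r ^ 2) * NNReal.pi := by
  rw [Complex.volume_ball, ENNReal.ofReal_pow hr]

lemma vol_closedBall' (x : ℂ) {r : ℝ} (hr : 0 ≤ r) :
    volume (Metric.closedBall x r) = ENNReal.ofReal (r ^ 2) * NNReal.pi := by
  rw [Complex.volume_closedBall, ENNReal.ofReal_pow hr]

lemma ball_packing {ι : Type*} (K : Finset ι) (c : ι → ℂ) {r : ℝ} (hr : 0 < r)
    (S : Set ℂ) {V : ℝ} (hV : 0 ≤ V)
    (hdisj : (↑K : Set ι).PairwiseDisjoint fun g => Metric.ball (c g) r)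
    (hsub : ∀ g ∈ K, Metric.ball (c g) r ⊆ S)
    (hS : volume S ≤ ENNReal.ofReal V * NNReal.pi) :
    (K.card : ℝ) * r ^ 2 ≤ V := by
  have hm : volume (⋃ g ∈ K, Metric.ball (c g) r)
      = ∑ g ∈ K, volume (Metric.ball (c g) r) :=
    measure_biUnion_finset hdisj (fun g _ => measurableSet_ball)
  have hsum : ∑ g ∈ K, volume (Metric.ball (c g) r)
      = ENNReal.ofReal (K.card * r ^ 2) * NNReal.pi := by
    rw [Finset.sum_congr rfl (fun g _ => vol_ball' (c g) hr.le), Finset.sum_const,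
      nsmul_eq_mul, ENNReal.ofReal_mul (by positivity), ENNReal.ofReal_natCast, mul_assoc]
  refine cancel_pi hV ?_
  rw [← hsum, ← hm]
  exact le_trans (measure_mono (Set.iUnion₂_subset hsub)) hS

lemma cover_bound {ι : Type*} (F : Finset ι) (Tl : ι → Set ℂ) (cc : ι → ℂ) {D ρ : ℝ}
    (hD : 0 ≤ D) (hρ : 0 ≤ ρ)
    (hsub : ∀ g ∈ F, Tl g ⊆ Metric.closedBall (cc g) D)
    (hcover : Metric.closedBall (0 : ℂ) ρ ⊆ ⋃ g ∈ F, Tl g) :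
    ρ ^ 2 ≤ (F.card : ℝ) * D ^ 2 := by
  refine cancel_pi (by positivity) ?_
  rw [← vol_closedBall' (0:ℂ) hρ]
  calc volume (Metric.closedBall (0:ℂ) ρ) ≤ volume (⋃ g ∈ F, Tl g) := measure_mono hcover
    _ ≤ ∑ g ∈ F, volume (Tl g) := measure_biUnion_finset_le F Tl
    _ ≤ ∑ g ∈ F, ENNReal.ofReal (D ^ 2) * NNReal.pi := by
        refine Finset.sum_le_sum fun g _ => ?_
        rw [← vol_closedBall' (cc g) hD]
        exact measure_mono (hsub g ‹_›)
    _ = ENNReal.ofReal (F.card * D ^ 2) * NNReal.pi := by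
        rw [Finset.sum_const, nsmul_eq_mul, ENNReal.ofReal_mul (by positivity),
          ENNReal.ofReal_natCast, mul_assoc]

lemma annulus_vol {ρ R : ℝ} (hρ : 0 ≤ ρ) (hR : ρ ≤ R) :
    volume (Metric.closedBall (0:ℂ) R \ Metric.closedBall (0:ℂ) ρ)
      ≤ ENNReal.ofReal (R ^ 2 - ρ ^ 2) * NNReal.pi := by
  have h1 : volume (Metric.closedBall (0:ℂ) R \ Metric.closedBall (0:ℂ) ρ)
      = volume (Metric.closedBall (0:ℂ) R) - volume (Metric.closedBall (0:ℂ) ρ) :=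
    measure_diff (Metric.closedBall_subset_closedBall hR)
      measurableSet_closedBall.nullMeasurableSet
      (measure_closedBall_lt_top).ne
  rw [h1, vol_closedBall' _ (hρ.trans hR), vol_closedBall' _ hρ]
  rw [tsub_le_iff_right, ← add_mul,
    ← ENNReal.ofReal_add (by nlinarith : (0:ℝ) ≤ R ^ 2 - ρ ^ 2) (by positivity)]
  have h2 : R ^ 2 - ρ ^ 2 + ρ ^ 2 = R ^ 2 := by ring
  rw [h2]

end Packing

lemma final_arith {c M N n1 D r ρ : ℝ} (hρ1 : 1 ≤ ρ) (hr : 0 < r) (hD : 0 < D)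
    (hN0 : 0 ≤ N) (hc0 : 0 ≤ c) (hM0 : 0 ≤ M)
    (hn : N + 1 ≤ n1)
    (hb : ρ^2 ≤ c * D^2)
    (hkeyR : c * n1 ≤ (M + c) * N)
    (hann : M * r^2 ≤ (ρ + 4*D)^2 - ρ^2)
    (hρ2 : 8*N*D^3 + 16*N*D^4 + 1 ≤ ρ * r^2) : False := by
  have hcM : c ≤ N * M := by nlinarith
  have h3 : M * r^2 ≤ 8*ρ*D + 16*D^2 := by nlinarith
  have e1 : ρ^2 * r^2 ≤ c * D^2 * r^2 :=
    mul_le_mul_of_nonneg_right hb (by positivity)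
  have e2 : c * (D^2 * r^2) ≤ N * M * (D^2 * r^2) :=
    mul_le_mul_of_nonneg_right hcM (by positivity)
  have e3 : N * D^2 * (M * r^2) ≤ N * D^2 * (8*ρ*D + 16*D^2) :=
    mul_le_mul_of_nonneg_left h3 (by positivity)
  have e4 : ρ^2 * r^2 ≤ 8*N*D^3*ρ + 16*N*D^4 := by nlinarith [e1, e2, e3]
  have e5 : ρ * (8*N*D^3 + 16*N*D^4 + 1) ≤ ρ * (ρ * r^2) :=
    mul_le_mul_of_nonneg_left hρ2 (by linarith)
  have e6 : 0 ≤ 16*N*D^4 * (ρ - 1) := mul_nonneg (by positivity) (by linarith)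
  nlinarith [e4, e5, e6]

/-- For a modified tile `Q` (a compact tile with nonempty
interior) whose boundary carries `n₁` instances of the bump shape `R` (the
finite point set `Rpts`) and `n₂` instances of the complementary shape `R'`
(the finite point set `R'pts`), with `n₁ > n₂`: in any finite simply connected
patch of non-overlapping copies of `Q` (bumps of distinct tiles never
coinciding) in which matching means an `R` instance coinciding with an `R'`
instance of another tile, at least `(n₁ − n₂) ·` (number of tiles) instances of
`R` are unmatched (they lie on the boundary of the patch); hence no tiling of
the whole plane with every `R` instance matched exists. -/
theorem patch_surplus_and_no_tiling (Q : Set ℂ)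
    (hQc : IsCompact Q) (hQi : (interior Q).Nonempty)
    (Rpts R'pts : Set ℂ) (hR : Rpts ⊆ frontier Q) (hR' : R'pts ⊆ frontier Q)
    (hRfin : Rpts.Finite) (hR'fin : R'pts.Finite)
    (n₁ n₂ : ℕ) (hn₁ : Rpts.ncard = n₁) (hn₂ : R'pts.ncard = n₂) (hlt : n₂ < n₁) :
    (∀ F : Finset DirectIsom,
      (↑F : Set DirectIsom).Pairwise
        (fun g g' => Disjoint (interior (g.image Q)) (interior (g'.image Q))) →
      (↑F : Set DirectIsom).Pairwise
        (fun g g' => Disjoint (g.image Rpts) (g'.image Rpts)) →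
      SimplyConnectedSpace ↥(⋃ g ∈ (↑F : Set DirectIsom), g.image Q) →
      (n₁ - n₂) * F.card ≤
        {pr : DirectIsom × ℂ | pr.1 ∈ F ∧ pr.2 ∈ pr.1.image Rpts ∧
          ¬ ∃ g' ∈ F, g' ≠ pr.1 ∧ pr.2 ∈ g'.image R'pts}.ncard) ∧
    ¬ ∃ G : Set DirectIsom,
        (⋃ g ∈ G, g.image Q) = univ ∧
        (G.Pairwise fun g g' => Disjoint (interior (g.image Q)) (interior (g'.image Q))) ∧
        (G.Pairwise fun g g' => Disjoint (g.image Rpts) (g'.image Rpts)) ∧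
        (∀ g ∈ G, ∀ p ∈ g.image Rpts, ∃ g' ∈ G, g' ≠ g ∧ p ∈ g'.image R'pts) := by
  constructor
  · intro F _hint hdisjR _hsc
    exact patch_surplus Rpts R'pts hRfin hR'fin n₁ n₂ hn₁ hn₂ F hdisjR
  · rintro ⟨G, hGcover, hGint, hGdisjR, hGmatch⟩
    classical
    obtain ⟨x₀, hx₀⟩ := hQi
    obtain ⟨r, hrpos, hball₀⟩ := Metric.isOpen_iff.mp isOpen_interior x₀ hx₀
    obtain ⟨D₀, hD₀⟩ := (Metric.isBounded_iff_subset_closedBall x₀).mp hQc.isBounded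
    set D := max D₀ r with hDdef
    have hrD : r ≤ D := le_max_right _ _
    have hDpos : 0 < D := lt_of_lt_of_le hrpos hrD
    have hQsub : Q ⊆ Metric.closedBall x₀ D :=
      hD₀.trans (Metric.closedBall_subset_closedBall (le_max_left _ _))
    have hRQ : Rpts ⊆ Q := hR.trans hQc.isClosed.frontier_subset
    have hR'Q : R'pts ⊆ Q := hR'.trans hQc.isClosed.frontier_subset
    have htile_sub : ∀ g : DirectIsom, g.image Q ⊆ Metric.closedBall (g.apply x₀) D :=
      fun g => g.image_subset_closedBall hQsub
    have hball_sub : ∀ g : DirectIsom,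
        Metric.ball (g.apply x₀) r ⊆ interior (g.image Q) := by
      intro g
      rw [← g.image_ball]
      calc g.apply '' Metric.ball x₀ r ⊆ g.apply '' interior Q := Set.image_mono hball₀
        _ = interior (g.image Q) := g.image_interior Q
    have hballs_disj : (G : Set DirectIsom).PairwiseDisjoint
        (fun g => Metric.ball (g.apply x₀) r) := by
      intro g hg g' hg' hne
      exact Disjoint.mono (hball_sub g) (hball_sub g') (hGint hg hg' hne)
    set meets : ℝ → Set DirectIsom := fun R =>
      {g | g ∈ G ∧ (g.image Q ∩ Metric.closedBall 0 R).Nonempty} with hmeets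
    have hcenter : ∀ {R : ℝ} {g : DirectIsom}, g ∈ meets R →
        dist (g.apply x₀) (0:ℂ) ≤ R + D := by
      rintro R g ⟨_, y, hy1, hy2⟩
      have h1 : dist y (g.apply x₀) ≤ D := Metric.mem_closedBall.mp (htile_sub g hy1)
      have h2 : dist y 0 ≤ R := Metric.mem_closedBall.mp hy2
      calc dist (g.apply x₀) 0 ≤ dist (g.apply x₀) y + dist y 0 := dist_triangle _ _ _
        _ ≤ D + R := by rw [dist_comm (g.apply x₀) y]; exact add_le_add h1 h2
        _ = R + D := by ring
    have hpack : ∀ R : ℝ, 0 ≤ R → ∀ K : Finset DirectIsom, ↑K ⊆ meets R →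
        (K.card : ℝ) * r ^ 2 ≤ (R + 2 * D) ^ 2 := by
      intro R hR0 K hK
      refine ball_packing K (fun g => g.apply x₀) hrpos
        (Metric.closedBall 0 (R + 2 * D)) (by positivity)
        (hballs_disj.subset (fun g hg => (hK hg).1)) ?_
        (le_of_eq (vol_closedBall' _ (by positivity)))
      intro g hg
      refine Metric.ball_subset_closedBall.trans (Metric.closedBall_subset_closedBall' ?_)
      have := hcenter (hK hg)
      linarith
    have hfinite : ∀ R : ℝ, 0 ≤ R → (meets R).Finite := by
      intro R hR0
      by_contra hinf
      obtain ⟨K, hKsub, hKcard⟩ := Set.Infinite.exists_subset_card_eq hinf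
        (⌈((R + 2*D)^2) / r^2⌉₊ + 1)
      have hb := hpack R hR0 K hKsub
      rw [hKcard] at hb
      have h1 : ((R + 2*D)^2) / r^2 ≤ (⌈((R + 2*D)^2) / r^2⌉₊ : ℝ) := Nat.le_ceil _
      have h2 : (0:ℝ) < r^2 := by positivity
      rw [div_le_iff₀ h2] at h1
      push_cast at hb
      nlinarith
    set ρ := max 1 ((8*(n₂:ℝ)*D^3 + 16*(n₂:ℝ)*D^4 + 1) / r^2) with hρdef
    have hρ1 : (1:ℝ) ≤ ρ := le_max_left _ _
    have hρ0 : (0:ℝ) ≤ ρ := by linarith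
    have hρ2 : 8*(n₂:ℝ)*D^3 + 16*(n₂:ℝ)*D^4 + 1 ≤ ρ * r^2 := by
      have h := le_max_right 1 ((8*(n₂:ℝ)*D^3 + 16*(n₂:ℝ)*D^4 + 1) / r^2)
      rwa [div_le_iff₀ (by positivity)] at h
    have hρ2D0 : (0:ℝ) ≤ ρ + 2*D := by linarith
    set F := (hfinite ρ hρ0).toFinset with hFdef
    set F₂ := (hfinite (ρ + 2*D) hρ2D0).toFinset with hF₂def
    have hFmem : ∀ {g}, g ∈ F ↔ g ∈ meets ρ := fun {g} => Set.Finite.mem_toFinset _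
    have hF₂mem : ∀ {g}, g ∈ F₂ ↔ g ∈ meets (ρ+2*D) := fun {g} => Set.Finite.mem_toFinset _
    have hFsub : F ⊆ F₂ := by
      intro g hg
      obtain ⟨hgG, y, hy1, hy2⟩ := hFmem.mp hg
      exact hF₂mem.mpr ⟨hgG, y, hy1,
        Metric.closedBall_subset_closedBall (by linarith) hy2⟩
    have hcov : Metric.closedBall (0:ℂ) ρ ⊆ ⋃ g ∈ F, g.image Q := by
      intro z hz
      have hz' : z ∈ ⋃ g ∈ G, g.image Q := by rw [hGcover]; trivial
      obtain ⟨g, hgG, hzg⟩ := Set.mem_iUnion₂.mp hz'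
      exact Set.mem_iUnion₂.mpr ⟨g, hFmem.mpr ⟨hgG, z, hzg, hz⟩, hzg⟩
    have hb : ρ^2 ≤ (F.card : ℝ) * D^2 :=
      cover_bound F (fun g => g.image Q) (fun g => g.apply x₀) hDpos.le hρ0
        (fun g _ => htile_sub g) hcov
    set Rfin := hRfin.toFinset with hRfdef
    set R'fin := hR'fin.toFinset with hR'fdef
    have hRc : (↑Rfin : Set ℂ) = Rpts := hRfin.coe_toFinset
    have hR'c : (↑R'fin : Set ℂ) = R'pts := hR'fin.coe_toFinset
    have hRcard : Rfin.card = n₁ := by rw [← hn₁, Set.ncard_eq_toFinset_card _ hRfin]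
    have hR'card : R'fin.card = n₂ := by rw [← hn₂, Set.ncard_eq_toFinset_card _ hR'fin]
    have hkey : F.card * n₁ ≤ F₂.card * n₂ := by
      rw [← hRcard, ← hR'card, ← card_pairsOf F Rfin]
      refine card_matched_le Rfin R'fin F F₂ (pairsOf F Rfin) (le_refl _) ?_ ?_
      · rw [hRc]
        exact hGdisjR.mono (fun g hg => (hFmem.mp hg).1)
      · intro pr hpr
        obtain ⟨hg, hp⟩ := mem_pairsOf.mp hpr
        have hgG : pr.1 ∈ G := (hFmem.mp hg).1
        rw [hRc] at hp
        obtain ⟨g', hg'G, _hne, hmem⟩ := hGmatch pr.1 hgG pr.2 hp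
        have hp1 : dist pr.2 (pr.1.apply x₀) ≤ D :=
          Metric.mem_closedBall.mp (htile_sub pr.1 (pr.1.image_mono hRQ hp))
        have hp2 : dist (pr.1.apply x₀) (0:ℂ) ≤ ρ + D := hcenter (hFmem.mp hg)
        have hpd : dist pr.2 (0:ℂ) ≤ ρ + 2*D := by
          calc dist pr.2 0 ≤ dist pr.2 (pr.1.apply x₀) + dist (pr.1.apply x₀) 0 :=
                dist_triangle _ _ _
            _ ≤ D + (ρ + D) := add_le_add hp1 hp2
            _ = ρ + 2*D := by ring
        exact ⟨g', hF₂mem.mpr ⟨hg'G, pr.2, g'.image_mono hR'Q hmem,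
          Metric.mem_closedBall.mpr hpd⟩, hR'c ▸ hmem⟩
    have hann : ((F₂ \ F).card : ℝ) * r^2 ≤ (ρ + 4*D)^2 - ρ^2 := by
      refine ball_packing (F₂ \ F) (fun g => g.apply x₀) hrpos
        (Metric.closedBall (0:ℂ) (ρ+4*D) \ Metric.closedBall (0:ℂ) ρ)
        (by nlinarith) ?_ ?_ (annulus_vol hρ0 (by linarith))
      · exact hballs_disj.subset
          (fun g hg => (hF₂mem.mp (Finset.mem_sdiff.mp hg).1).1)
      · intro g hg
        obtain ⟨hg2, hgn⟩ := Finset.mem_sdiff.mp hg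
        intro z hz
        have hc := hcenter (hF₂mem.mp hg2)
        have hzr : dist z (g.apply x₀) < r := Metric.mem_ball.mp hz
        constructor
        · refine Metric.mem_closedBall.mpr ?_
          calc dist z 0 ≤ dist z (g.apply x₀) + dist (g.apply x₀) 0 := dist_triangle _ _ _
            _ ≤ r + (ρ + 2*D + D) := add_le_add hzr.le hc
            _ ≤ ρ + 4*D := by linarith
        · intro hzρ
          have hzQ : z ∈ g.image Q := interior_subset (hball_sub g hz)
          exact hgn (hFmem.mpr ⟨(hF₂mem.mp hg2).1, z, hzQ, hzρ⟩)
    have hsplit : (F₂ \ F).card + F.card = F₂.card :=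
      Finset.card_sdiff_add_card_eq_card hFsub
    have hkeyR : (F.card:ℝ) * n₁ ≤ (((F₂ \ F).card:ℝ) + F.card) * n₂ := by
      have h : ((F.card * n₁ : ℕ) : ℝ) ≤ ((F₂.card * n₂ : ℕ) : ℝ) := Nat.cast_le.mpr hkey
      rw [← hsplit] at h
      push_cast at h
      linarith
    have hn : (n₂:ℝ) + 1 ≤ n₁ := by exact_mod_cast Nat.succ_le_of_lt hlt
    exact final_arith hρ1 hrpos hDpos (Nat.cast_nonneg _) (Nat.cast_nonneg _)
      (Nat.cast_nonneg _) hn hb hkeyR hann hρ2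
end
end
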